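/- arXiv:2004.06032 — 9 statements merged into one kernel-verified Lean document; each statement's English description precedes it below -/
import Mathlib

section
/- Let n ≥ 1 and 0 ≤ t ≤ n. The maximum of |D_t(x)| over all binary words x of length n equals Σ_{i=0}^{t} C(n−t, i), where C denotes the binomial coefficient. Moreover, this maximum is attained by the alternating word 0101… -/
/-!
Write `N_m(x)` for the number of distinct length-`m` subsequences of `x`. A length-`(m+1)`
subsequence of `a :: y` either starts with `a`, and its tail is a subsequence of `y`, or starts
with `!a`; then it is already a subsequence of `y`, so its tail is a subsequence of `y.tail`.
Hence `N_{m+1}(a :: y) ≤ N_m(y) + N_m(y.tail)`, with equality when `y` starts with `!a`. The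
partial binomial sums `∑_{i ≤ d} C(m, i)` obey the same Pascal recursion in `(m, d)`, so they bound
`N_m(x)` for `d = |x| - m`, and the alternating word attains the bound at every step.
-/

/-- The `t`-deletion ball of a binary word `x`: all subsequences of `x`
of length `|x| - t` (empty when `t > |x|`). -/
def deletionBall (t : ℕ) (x : List Bool) : Set (List Bool) :=
  {z | z.Sublist x ∧ z.length + t = x.length}

/-- The alternating word `0101…` of length `n`. -/
def altWord (n : ℕ) : List Bool := (List.range n).map (fun i => decide (i % 2 = 1))

open Finset

def subwords {α : Type*} [DecidableEq α] (m : ℕ) (x : List α) : Finset (List α) :=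
  (x.sublistsLen m).toFinset

def partialChooseSum (m d : ℕ) : ℕ := ∑ i ∈ range (d + 1), m.choose i

section Subwords

variable {α : Type*} [DecidableEq α]

@[simp]
lemma mem_subwords {m : ℕ} {x z : List α} : z ∈ subwords m x ↔ z.Sublist x ∧ z.length = m := by
  simp [subwords]

lemma subwords_zero (x : List α) : subwords 0 x = {[]} := by
  simp [subwords]

lemma subwords_length_self (x : List α) : subwords x.length x = {x} := by
  simp [subwords]

lemma subwords_subset_singleton {m : ℕ} {x : List α} (h : x.length ≤ m) :
    subwords m x ⊆ {x} := fun z hz => by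
  rw [mem_subwords] at hz
  exact mem_singleton.mpr (hz.1.eq_of_length_le (hz.2 ▸ h))

end Subwords

lemma deletionBall_eq_subwords {t : ℕ} {x : List Bool} (ht : t ≤ x.length) :
    deletionBall t x = subwords (x.length - t) x := by
  ext z
  simp only [deletionBall, Set.mem_ofPred_eq, mem_coe, mem_subwords]
  refine and_congr_right fun _ => ?_
  omega

lemma subwords_succ_cons_subset (m : ℕ) (a : Bool) (y : List Bool) :
    subwords (m + 1) (a :: y) ⊆
      (subwords m y).image (List.cons a) ∪ (subwords m y.tail).image (List.cons !a) := by
  intro z hz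
  obtain ⟨hsub, hlen⟩ := mem_subwords.mp hz
  obtain ⟨c, w, rfl⟩ := List.exists_cons_of_length_eq_add_one hlen
  simp only [List.length_cons, Nat.add_right_cancel_iff] at hlen
  simp only [mem_union, mem_image, mem_subwords, List.cons.injEq]
  by_cases hca : c = a
  · subst hca
    exact Or.inl ⟨w, ⟨List.cons_sublist_cons.mp hsub, hlen⟩, rfl, rfl⟩
  · exact Or.inr ⟨w, ⟨(hsub.of_cons_of_ne hca).tail, hlen⟩, (Bool.eq_not_of_ne hca).symm, rfl⟩

lemma subwords_succ_cons_cons_of_ne {a b : Bool} (hab : a ≠ b) (m : ℕ) (z : List Bool) :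
    subwords (m + 1) (a :: b :: z) =
      (subwords m (b :: z)).image (List.cons a) ∪ (subwords m z).image (List.cons b) := by
  have hb : b = !a := Bool.eq_not_of_ne hab.symm
  refine Subset.antisymm (hb ▸ subwords_succ_cons_subset m a (b :: z)) ?_
  simp only [union_subset_iff, image_subset_iff, mem_subwords, List.length_cons]
  exact ⟨fun w hw => ⟨hw.1.cons_cons a, by rw [hw.2]⟩,
    fun w hw => ⟨(hw.1.cons_cons b).cons a, by rw [hw.2]⟩⟩

lemma card_subwords_succ_cons_le (m : ℕ) (a : Bool) (y : List Bool) :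
    #(subwords (m + 1) (a :: y)) ≤ #(subwords m y) + #(subwords m y.tail) :=
  calc #(subwords (m + 1) (a :: y))
      ≤ #((subwords m y).image (List.cons a) ∪ (subwords m y.tail).image (List.cons !a)) :=
        card_le_card (subwords_succ_cons_subset m a y)
    _ ≤ #((subwords m y).image (List.cons a)) + #((subwords m y.tail).image (List.cons !a)) :=
        card_union_le _ _
    _ ≤ #(subwords m y) + #(subwords m y.tail) := add_le_add card_image_le card_image_le

lemma card_subwords_succ_cons_cons_of_ne {a b : Bool} (hab : a ≠ b) (m : ℕ) (z : List Bool) :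
    #(subwords (m + 1) (a :: b :: z)) = #(subwords m (b :: z)) + #(subwords m z) := by
  have hdisj : Disjoint ((subwords m (b :: z)).image (List.cons a))
      ((subwords m z).image (List.cons b)) := by
    rw [disjoint_left]
    simp only [mem_image]
    rintro _ ⟨_, _, rfl⟩ ⟨_, _, h⟩
    exact hab (List.cons.inj h).1.symm
  rw [subwords_succ_cons_cons_of_ne hab, card_union_of_disjoint hdisj,
    card_image_of_injective _ List.cons_injective, card_image_of_injective _ List.cons_injective]

lemma partialChooseSum_zero_left (d : ℕ) : partialChooseSum 0 d = 1 := by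
  simp [partialChooseSum, sum_range_succ']

lemma partialChooseSum_zero_right (m : ℕ) : partialChooseSum m 0 = 1 := by
  simp [partialChooseSum]

lemma partialChooseSum_succ_succ (m d : ℕ) :
    partialChooseSum (m + 1) (d + 1) = partialChooseSum m (d + 1) + partialChooseSum m d := by
  simp only [partialChooseSum]
  rw [sum_range_succ' _ (d + 1), sum_range_succ' (fun i => m.choose i) (d + 1)]
  simp only [Nat.choose_succ_succ, sum_add_distrib, Nat.choose_zero_right]
  ring

lemma card_subwords_le_of_length_le {m : ℕ} {x : List Bool} (h : x.length ≤ m) :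
    #(subwords m x) ≤ partialChooseSum m (x.length - m) := by
  rw [Nat.sub_eq_zero_of_le h, partialChooseSum_zero_right]
  simpa using card_le_card (subwords_subset_singleton h)

lemma card_subwords_of_length_eq {m : ℕ} {x : List Bool} (h : x.length = m) :
    #(subwords m x) = partialChooseSum m (x.length - m) := by
  rw [← h, subwords_length_self, Nat.sub_self, partialChooseSum_zero_right, card_singleton]

theorem card_subwords_le : ∀ (m : ℕ) (x : List Bool),
    #(subwords m x) ≤ partialChooseSum m (x.length - m)
  | 0, x => by simp [subwords_zero, partialChooseSum_zero_left]
  | _ + 1, [] => card_subwords_le_of_length_le (by simp)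
  | _ + 1, [_] => card_subwords_le_of_length_le (by simp)
  | m + 1, a :: b :: z => by
    rcases le_or_gt (z.length + 2) (m + 1) with hfull | hm
    · exact card_subwords_le_of_length_le hfull
    obtain ⟨d, hd⟩ : ∃ d, z.length = m + d := ⟨z.length - m, by omega⟩
    have hlen : (a :: b :: z).length - (m + 1) = d + 1 := by simp only [List.length_cons]; omega
    rw [hlen, partialChooseSum_succ_succ]
    refine (card_subwords_succ_cons_le m a (b :: z)).trans (add_le_add ?_ ?_)
    · simpa [hd, show m + d + 1 - m = d + 1 by omega] using card_subwords_le m (b :: z)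
    · simpa [hd] using card_subwords_le m z

theorem card_subwords_of_isChain_ne : ∀ {m : ℕ} {x : List Bool}, x.IsChain (· ≠ ·) →
    m ≤ x.length → #(subwords m x) = partialChooseSum m (x.length - m)
  | 0, x, _, _ => by simp [subwords_zero, partialChooseSum_zero_left]
  | _ + 1, [], _, hm => absurd hm (by simp)
  | _ + 1, [_], _, hm => card_subwords_of_length_eq (by simp at hm ⊢; omega)
  | m + 1, a :: b :: z, hx, hm => by
    rcases hm.eq_or_lt with hfull | hm
    · exact card_subwords_of_length_eq hfull.symm
    obtain ⟨hab, hbz⟩ := List.isChain_cons_cons.mp hx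
    have hz : z.IsChain (· ≠ ·) := hbz.tail
    obtain ⟨d, hd⟩ : ∃ d, z.length = m + d := ⟨z.length - m, by simp at hm; omega⟩
    have hlen : (a :: b :: z).length - (m + 1) = d + 1 := by simp only [List.length_cons]; omega
    rw [card_subwords_succ_cons_cons_of_ne hab, card_subwords_of_isChain_ne hbz (by simp; omega),
      card_subwords_of_isChain_ne hz (by omega), hlen, partialChooseSum_succ_succ]
    simp only [List.length_cons, hd]
    congr 2 <;> omega

lemma altWord_length (n : ℕ) : (altWord n).length = n := by simp [altWord]

lemma isChain_altWord (n : ℕ) : (altWord n).IsChain (· ≠ ·) := by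
  rw [altWord, List.isChain_map]
  cases n with
  | zero => simp
  | succ n =>
    rw [List.isChain_range_succ]
    intro i _
    simp only [ne_eq, decide_eq_decide]
    omega

theorem stmt0_general (n t : ℕ) (ht : t ≤ n) :
    (∀ x : List Bool, x.length = n →
      (deletionBall t x).ncard ≤ ∑ i ∈ Finset.range (t + 1), (n - t).choose i) ∧
    (deletionBall t (altWord n)).ncard = ∑ i ∈ Finset.range (t + 1), (n - t).choose i := by
  have hball : ∀ x : List Bool, x.length = n →
      (deletionBall t x).ncard = #(subwords (n - t) x) := by
    rintro x rfl
    rw [deletionBall_eq_subwords ht, Set.ncard_coe_finset]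
  have hnt : n - (n - t) = t := by omega
  refine ⟨fun x hx => ?_, ?_⟩
  · rw [hball x hx]
    show _ ≤ partialChooseSum (n - t) t
    simpa [hx, hnt] using card_subwords_le (n - t) x
  · rw [hball _ (altWord_length n)]
    show _ = partialChooseSum (n - t) t
    simpa [altWord_length, hnt] using
      card_subwords_of_isChain_ne (isChain_altWord n) (m := n - t) (by simp [altWord_length])

theorem stmt0 (n t : ℕ) (hn : 1 ≤ n) (ht : t ≤ n) :
    (∀ x : List Bool, x.length = n →
      (deletionBall t x).ncard ≤ ∑ i ∈ Finset.range (t + 1), (n - t).choose i) ∧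
    (deletionBall t (altWord n)).ncard = ∑ i ∈ Finset.range (t + 1), (n - t).choose i :=
  stmt0_general n t ht
end

section
/- (Levenshtein) Let 1 ≤ t ≤ n−1. The maximum of |D_t(x) ∩ D_t(y)| over all pairs of distinct binary words x, y of length n equals 2·D_{t−1}(n−2) = 2·Σ_{i=0}^{t−1} C(n−t−1, i). -/
open Finset

section Sublists

variable {α : Type*} [DecidableEq α]

def afterFirst (d : α) : List α → List α
  | [] => []
  | a :: w => if a = d then w else afterFirst d w

@[simp]
lemma afterFirst_cons_self (d : α) (w : List α) : afterFirst d (d :: w) = w := by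
  simp [afterFirst]

@[simp]
lemma afterFirst_cons_of_ne {a d : α} (h : a ≠ d) (w : List α) :
    afterFirst d (a :: w) = afterFirst d w := by
  simp [afterFirst, h]

lemma length_afterFirst_le (d : α) (w : List α) : (afterFirst d w).length ≤ w.length - 1 := by
  induction w with
  | nil => simp [afterFirst]
  | cons a w ih =>
    by_cases h : a = d
    · simp [h]
    · simp only [afterFirst_cons_of_ne h, List.length_cons]
      omega

lemma length_afterFirst_le_of_head?_ne {d : α} {w : List α} (h : w.head? ≠ some d) :
    (afterFirst d w).length ≤ w.length - 2 := by
  cases w with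
  | nil => simp [afterFirst]
  | cons a w =>
    have had : a ≠ d := fun e => h (by simp [e])
    have := length_afterFirst_le d w
    simp only [afterFirst_cons_of_ne had, List.length_cons]
    omega

lemma List.Sublist.sublist_afterFirst {d : α} {z w : List α} (h : (d :: z).Sublist w) :
    z.Sublist (afterFirst d w) := by
  induction w with
  | nil => simp at h
  | cons a w ih =>
    by_cases had : a = d
    · subst had
      simpa using h
    · rw [afterFirst_cons_of_ne had]
      cases h with
      | cons _ h => exact ih h
      | cons_cons _ h => exact absurd rfl had

def sublistsOfLength (m : ℕ) (x : List α) : Finset (List α) :=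
  (x.sublistsLen m).toFinset

@[simp]
lemma mem_sublistsOfLength {m : ℕ} {x z : List α} :
    z ∈ sublistsOfLength m x ↔ z.Sublist x ∧ z.length = m := by
  simp [sublistsOfLength]

@[simp]
lemma card_sublistsOfLength_zero (x : List α) : #(sublistsOfLength 0 x) = 1 := by
  simp [sublistsOfLength]

lemma card_sublistsOfLength_le_one {m : ℕ} {x : List α} (h : x.length ≤ m) :
    #(sublistsOfLength m x) ≤ 1 :=
  card_le_one.mpr fun z hz z' hz' => by
    rw [mem_sublistsOfLength] at hz hz'
    have := hz.1.length_le
    have := hz'.1.length_le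
    rw [hz.1.eq_of_length (by omega), hz'.1.eq_of_length (by omega)]

def commonSublists (m : ℕ) (x y : List α) : Finset (List α) :=
  sublistsOfLength m x ∩ sublistsOfLength m y

@[simp]
lemma mem_commonSublists {m : ℕ} {x y z : List α} :
    z ∈ commonSublists m x y ↔ z.Sublist x ∧ z.Sublist y ∧ z.length = m := by
  simp only [commonSublists, mem_inter, mem_sublistsOfLength]
  tauto

@[simp]
lemma commonSublists_self (m : ℕ) (x : List α) :
    commonSublists m x x = sublistsOfLength m x :=
  inter_self _

lemma commonSublists_eq_empty {m : ℕ} {x y : List α} (hx : x.length = m) (hy : y.length = m)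
    (hxy : x ≠ y) : commonSublists m x y = ∅ :=
  eq_empty_of_forall_notMem fun z hz => by
    rw [mem_commonSublists] at hz
    exact hxy ((hz.1.eq_of_length (by omega)).symm.trans (hz.2.1.eq_of_length (by omega)))

lemma card_commonSublists_succ_le [Fintype α] (m : ℕ) (x y : List α) :
    #(commonSublists (m + 1) x y) ≤
      ∑ d, #(commonSublists m (afterFirst d x) (afterFirst d y)) := by
  have hsub : commonSublists (m + 1) x y ⊆ univ.biUnion fun d =>
      (commonSublists m (afterFirst d x) (afterFirst d y)).image (d :: ·) := by
    intro z hz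
    rw [mem_commonSublists] at hz
    obtain ⟨hx, hy, hlen⟩ := hz
    obtain ⟨d, z', rfl⟩ : ∃ d z', z = d :: z' := List.exists_cons_of_length_eq_add_one hlen
    simp only [mem_biUnion, mem_univ, true_and, mem_image, mem_commonSublists]
    exact ⟨d, z', ⟨hx.sublist_afterFirst, hy.sublist_afterFirst, by simpa using hlen⟩, rfl⟩
  calc #(commonSublists (m + 1) x y) ≤ _ := card_le_card hsub
    _ ≤ _ := card_biUnion_le
    _ ≤ _ := sum_le_sum fun d _ => card_image_le

lemma disjoint_image_cons {c d : α} (h : c ≠ d) (F G : Finset (List α)) :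
    Disjoint (F.image (c :: ·)) (G.image (d :: ·)) := by
  rw [disjoint_left]
  simp only [mem_image]
  rintro _ ⟨z, -, rfl⟩ ⟨z', -, hz'⟩
  exact h (List.cons.inj hz').1.symm

end Sublists

lemma sum_range_choose_succ (m s : ℕ) :
    ∑ i ∈ range (s + 1), (m + 1).choose i =
      ∑ i ∈ range (s + 1), m.choose i + ∑ i ∈ range s, m.choose i := by
  rw [sum_range_succ', sum_range_succ' (fun i => m.choose i)]
  simp only [Nat.choose_succ_succ, sum_add_distrib, Nat.choose_zero_right]
  ring

lemma sum_range_choose_succ_le (m s : ℕ) :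
    ∑ i ∈ range s, (m + 1).choose i ≤ 2 * ∑ i ∈ range s, m.choose i := by
  cases s with
  | zero => simp
  | succ s =>
    have := sum_le_sum_of_subset (f := fun i => m.choose i)
      (range_subset_range.mpr (by omega : s ≤ s + 1))
    rw [sum_range_choose_succ]
    omega

lemma one_le_sum_range_succ_choose (m s : ℕ) : 1 ≤ ∑ i ∈ range (s + 1), m.choose i := by
  simp [sum_range_succ']

lemma Bool.sum_eq_add_not {M : Type*} [AddCommMonoid M] (f : Bool → M) (a : Bool) :
    ∑ d, f d = f a + f (!a) := by
  cases a <;> simp [add_comm]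

lemma card_sublistsOfLength_le (m s : ℕ) (w : List Bool) (hw : w.length < m + s) :
    #(sublistsOfLength m w) ≤ ∑ i ∈ range s, m.choose i := by
  induction m generalizing s w with
  | zero =>
    cases s with
    | zero => omega
    | succ s => simpa using one_le_sum_range_succ_choose 0 s
  | succ m ih =>
    cases s with
    | zero =>
      simp only [range_zero, sum_empty, Nat.le_zero, card_eq_zero]
      exact eq_empty_of_forall_notMem fun z hz => by
        have := (mem_sublistsOfLength.mp hz).1.length_le
        have := (mem_sublistsOfLength.mp hz).2
        omega
    | succ s =>
      by_cases hshort : w.length ≤ m + 1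
      · exact (card_sublistsOfLength_le_one hshort).trans (one_le_sum_range_succ_choose _ _)
      obtain ⟨c, w', rfl⟩ : ∃ c w', w = c :: w' := List.exists_cons_of_ne_nil (by grind)
      have hsplit := card_commonSublists_succ_le m (c :: w') (c :: w')
      have hrest := length_afterFirst_le_of_head?_ne (d := !c) (w := c :: w') (by simp)
      simp only [commonSublists_self, Bool.sum_eq_add_not _ c, afterFirst_cons_self] at hsplit
      simp only [List.length_cons] at hw hshort hrest
      have h1 := ih (s + 1) w' (by omega)
      have h2 := ih s (afterFirst (!c) (c :: w')) (by omega)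
      rw [sum_range_choose_succ]
      omega

lemma card_commonSublists_le_of_length_lt {m s : ℕ} {x y : List Bool}
    (h : x.length < m + s ∨ y.length < m + s) :
    #(commonSublists m x y) ≤ ∑ i ∈ range s, m.choose i := by
  rcases h with h | h
  · exact (card_le_card inter_subset_left).trans (card_sublistsOfLength_le m s x h)
  · exact (card_le_card inter_subset_right).trans (card_sublistsOfLength_le m s y h)

lemma card_commonSublists_cons_not_cons_le (m t : ℕ) (a : Bool) (x y : List Bool)
    (hx : x.length = m + 1 + t) (hy : y.length = m + 1 + t) :
    #(commonSublists (m + 2) (a :: x) ((!a) :: y)) ≤ 2 * ∑ i ∈ range t, (m + 1).choose i := by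
  have hsplit : #(commonSublists (m + 2) (a :: x) ((!a) :: y)) ≤ _ :=
    card_commonSublists_succ_le (m + 1) (a :: x) ((!a) :: y)
  rw [Bool.sum_eq_add_not _ a] at hsplit
  have hy' := length_afterFirst_le_of_head?_ne (d := a) (w := (!a) :: y) (by simp)
  have hx' := length_afterFirst_le_of_head?_ne (d := !a) (w := a :: x) (by simp)
  simp only [List.length_cons] at hx' hy'
  have h1 : #(commonSublists (m + 1) (afterFirst a (a :: x)) (afterFirst a ((!a) :: y))) ≤
      ∑ i ∈ range t, (m + 1).choose i :=
    card_commonSublists_le_of_length_lt (.inr (by omega))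
  have h2 : #(commonSublists (m + 1) (afterFirst (!a) (a :: x)) (afterFirst (!a) ((!a) :: y))) ≤
      ∑ i ∈ range t, (m + 1).choose i :=
    card_commonSublists_le_of_length_lt (.inl (by omega))
  omega

lemma card_commonSublists_le (k t : ℕ) (x y : List Bool) (hx : x.length = k + 1 + t)
    (hy : y.length = k + 1 + t) (hxy : x ≠ y) :
    #(commonSublists (k + 1) x y) ≤ 2 * ∑ i ∈ range t, k.choose i := by
  induction k generalizing t x y with
  | zero =>
    cases t with
    | zero => simp [commonSublists_eq_empty hx hy hxy]
    | succ s =>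
      have hsplit : #(commonSublists 1 x y) ≤ _ := card_commonSublists_succ_le 0 x y
      have hzero (u v : List Bool) : #(commonSublists 0 u v) ≤ 1 :=
        (card_le_card inter_subset_left).trans (card_sublistsOfLength_zero u).le
      rw [Fintype.sum_bool] at hsplit
      have := hzero (afterFirst true x) (afterFirst true y)
      have := hzero (afterFirst false x) (afterFirst false y)
      rw [zero_add, show ∑ i ∈ range (s + 1), (0 : ℕ).choose i = 1 by simp [sum_range_succ']]
      omega
  | succ k ih =>
    cases t with
    | zero => simp [commonSublists_eq_empty hx hy hxy]
    | succ s =>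
      obtain ⟨a, xh, rfl⟩ : ∃ a xh, x = a :: xh := List.exists_cons_of_ne_nil (by grind)
      obtain ⟨b, yh, rfl⟩ : ∃ b yh, y = b :: yh := List.exists_cons_of_ne_nil (by grind)
      simp only [List.length_cons] at hx hy
      by_cases hab : b = !a
      · subst hab
        exact card_commonSublists_cons_not_cons_le k (s + 1) a xh yh (by omega) (by omega)
      obtain rfl : a = b := by simpa [eq_comm] using hab
      have hne : xh ≠ yh := fun h => hxy (by rw [h])
      have hsplit := card_commonSublists_succ_le (k + 1) (a :: xh) (a :: yh)
      simp only [Bool.sum_eq_add_not _ a, afterFirst_cons_self,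
        afterFirst_cons_of_ne (Bool.not_ne_self a).symm] at hsplit
      have h1 := ih (s + 1) xh yh (by omega) (by omega) hne
      -- Either both tails start with `!a`, and the suffixes after `!a` are their tails,
      -- or one of the suffixes is short.
      have h2 : #(commonSublists (k + 1) (afterFirst (!a) xh) (afterFirst (!a) yh)) ≤
          2 * ∑ i ∈ range s, k.choose i := by
        by_cases hboth : xh.head? = some (!a) ∧ yh.head? = some (!a)
        · obtain ⟨x2, rfl⟩ := List.head?_eq_some_iff.mp hboth.1
          obtain ⟨y2, rfl⟩ := List.head?_eq_some_iff.mp hboth.2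
          simp only [afterFirst_cons_self]
          simp only [List.length_cons] at hx hy
          exact ih s x2 y2 (by omega) (by omega) fun h => hne (by rw [h])
        · refine (card_commonSublists_le_of_length_lt ?_).trans (sum_range_choose_succ_le k s)
          rcases not_and_or.mp hboth with h | h
          · have := length_afterFirst_le_of_head?_ne h; omega
          · have := length_afterFirst_le_of_head?_ne h; omega
      rw [sum_range_choose_succ]
      omega

def alternating : ℕ → Bool → List Bool
  | 0, _ => []
  | n + 1, c => c :: alternating n (!c)

@[simp]
lemma length_alternating (n : ℕ) (c : Bool) : (alternating n c).length = n := by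
  induction n generalizing c <;> simp [alternating, *]

lemma alternating_sublist_succ (n : ℕ) (c : Bool) :
    (alternating n c).Sublist (alternating (n + 1) c) := by
  induction n generalizing c with
  | zero => simp [alternating]
  | succ n ih => exact (ih (!c)).cons_cons c

lemma cons_sublist_alternating {c : Bool} {z : List Bool} {L : ℕ}
    (h : z.Sublist (alternating L (!c))) (d : Bool) :
    (c :: z).Sublist (alternating (L + 2) d) := by
  obtain hd | hd : d = c ∨ d = !c := by cases c <;> cases d <;> simp
  · rw [hd]
    exact (h.trans (alternating_sublist_succ L (!c))).cons_cons c
  · rw [hd]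
    simpa [alternating] using (h.cons_cons c).cons (!c)

lemma sum_le_card_sublistsOfLength_alternating (m s : ℕ) (c : Bool) :
    ∑ i ∈ range (s + 1), m.choose i ≤ #(sublistsOfLength m (alternating (m + s) c)) := by
  induction m generalizing s c with
  | zero => simp [sum_range_succ']
  | succ m ih =>
    have hword : alternating (m + 1 + s) c = c :: alternating (m + s) (!c) := by
      rw [show m + 1 + s = m + s + 1 by omega, alternating]
    have hA : (sublistsOfLength m (alternating (m + s) (!c))).image (c :: ·) ⊆
        sublistsOfLength (m + 1) (alternating (m + 1 + s) c) := by
      intro z hz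
      simp only [mem_image, mem_sublistsOfLength] at hz ⊢
      obtain ⟨z, ⟨hz, hlen⟩, rfl⟩ := hz
      exact ⟨hword ▸ hz.cons_cons c, by simp [hlen]⟩
    have hcardA : #((sublistsOfLength m (alternating (m + s) (!c))).image (c :: ·)) =
        #(sublistsOfLength m (alternating (m + s) (!c))) :=
      card_image_of_injective _ List.cons_injective
    cases s with
    | zero =>
      have := ih 0 (!c)
      have := card_le_card hA
      simp only [zero_add, sum_range_one, Nat.choose_zero_right] at *
      omega
    | succ s =>
      have hB : (sublistsOfLength m (alternating (m + s) c)).image ((!c) :: ·) ⊆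
          sublistsOfLength (m + 1) (alternating (m + 1 + (s + 1)) c) := by
        intro z hz
        simp only [mem_image, mem_sublistsOfLength] at hz ⊢
        obtain ⟨z, ⟨hz, hlen⟩, rfl⟩ := hz
        refine ⟨?_, by simp [hlen]⟩
        rw [show m + 1 + (s + 1) = m + s + 2 by omega]
        exact cons_sublist_alternating (by simpa using hz) c
      have hcardB : #((sublistsOfLength m (alternating (m + s) c)).image ((!c) :: ·)) =
          #(sublistsOfLength m (alternating (m + s) c)) :=
        card_image_of_injective _ List.cons_injective
      have hunion := card_le_card (union_subset hA hB)
      rw [card_union_of_disjoint (disjoint_image_cons (by simp) _ _)] at hunion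
      have := ih (s + 1) (!c)
      have := ih s c
      rw [sum_range_choose_succ]
      omega

lemma sum_le_card_commonSublists_alternating (m s : ℕ) :
    2 * ∑ i ∈ range (s + 1), m.choose i ≤
      #(commonSublists (m + 1) (alternating (m + s + 2) false) (alternating (m + s + 2) true)) := by
  have hsub (c : Bool) : (sublistsOfLength m (alternating (m + s) (!c))).image (c :: ·) ⊆
      commonSublists (m + 1) (alternating (m + s + 2) false) (alternating (m + s + 2) true) := by
    intro z hz
    simp only [mem_image, mem_sublistsOfLength, mem_commonSublists] at hz ⊢
    obtain ⟨z, ⟨hz, rfl⟩, rfl⟩ := hz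
    exact ⟨cons_sublist_alternating hz false, cons_sublist_alternating hz true, rfl⟩
  have hunion := card_le_card (union_subset (hsub false) (hsub true))
  rw [card_union_of_disjoint (disjoint_image_cons (by simp) _ _),
    card_image_of_injective _ List.cons_injective,
    card_image_of_injective _ List.cons_injective] at hunion
  have := sum_le_card_sublistsOfLength_alternating m s true
  have := sum_le_card_sublistsOfLength_alternating m s false
  simp only [Bool.not_false, Bool.not_true] at hunion
  omega

lemma deletionBall_inter_eq_commonSublists {m t : ℕ} {x y : List Bool}
    (hx : x.length = m + t) (hy : y.length = m + t) :
    deletionBall t x ∩ deletionBall t y = ↑(commonSublists m x y) := by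
  ext z
  simp only [deletionBall, Set.mem_inter_iff, Set.mem_ofPred_eq, mem_coe, mem_commonSublists]
  constructor
  · rintro ⟨⟨hzx, hlen⟩, hzy, -⟩
    exact ⟨hzx, hzy, by omega⟩
  · rintro ⟨hzx, hzy, hlen⟩
    exact ⟨⟨hzx, by omega⟩, hzy, by omega⟩

/-- Levenshtein: for `1 ≤ t ≤ n-1`, the maximum of `|D_t(x) ∩ D_t(y)|` over distinct
binary words `x, y` of length `n` equals `2·D_{t-1}(n-2) = 2·∑_{i=0}^{t-1} C(n-t-1, i)`. -/
theorem stmt1 (n t : ℕ) (ht1 : 1 ≤ t) (ht2 : t ≤ n - 1) :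
    (∀ x y : List Bool, x.length = n → y.length = n → x ≠ y →
      (deletionBall t x ∩ deletionBall t y).ncard ≤
        2 * ∑ i ∈ Finset.range t, (n - t - 1).choose i) ∧
    (∃ x y : List Bool, x.length = n ∧ y.length = n ∧ x ≠ y ∧
      (deletionBall t x ∩ deletionBall t y).ncard =
        2 * ∑ i ∈ Finset.range t, (n - t - 1).choose i) := by
  obtain ⟨k, rfl⟩ : ∃ k, n = k + 1 + t := ⟨n - t - 1, by omega⟩
  obtain ⟨s, rfl⟩ : ∃ s, t = s + 1 := ⟨t - 1, by omega⟩
  have hk : k + 1 + (s + 1) - (s + 1) - 1 = k := by omega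
  simp only [hk]
  have upper (x y : List Bool) (hx : x.length = k + 1 + (s + 1))
      (hy : y.length = k + 1 + (s + 1)) (hxy : x ≠ y) :
      (deletionBall (s + 1) x ∩ deletionBall (s + 1) y).ncard ≤
        2 * ∑ i ∈ range (s + 1), k.choose i := by
    rw [deletionBall_inter_eq_commonSublists hx hy, Set.ncard_coe_finset]
    exact card_commonSublists_le k (s + 1) x y hx hy hxy
  have hlen (c : Bool) : (alternating (k + s + 2) c).length = k + 1 + (s + 1) := by
    simp only [length_alternating]
    omega
  refine ⟨upper, alternating (k + s + 2) false, alternating (k + s + 2) true, hlen false,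
    hlen true, by simp [alternating], ?_⟩
  refine le_antisymm (upper _ _ (hlen false) (hlen true) (by simp [alternating])) ?_
  rw [deletionBall_inter_eq_commonSublists (hlen false) (hlen true), Set.ncard_coe_finset]
  exact sum_le_card_commonSublists_alternating k s
end

section
/- Let x and y be distinct binary words of the same length n ≥ 1. Then |D_1(x) ∩ D_1(y)| = 2 if and only if x and y are Type-A-confusable. -/
/-- `x` and `y` are Type-A-confusable: `x = u·a·v` and `y = u·ā·v` for an
alternating word `a` of length at least 2. -/
def TypeAConfusable (x y : List Bool) : Prop :=
  ∃ u a v : List Bool, 2 ≤ a.length ∧ List.Chain' (· ≠ ·) a ∧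
    x = u ++ a ++ v ∧ y = u ++ a.map (!·) ++ v

/-!
Let `i ≤ j` be the first and the last position at which `x` and `y` differ. If deleting
position `p` of `x` and position `q ≥ p` of `y` gives the same word, then `p ≤ i ≤ j ≤ q`, `x` is
constant on `[p, i]`, and `x` shifted left on `[i, j]` agrees with `y`; symmetrically for `q ≤ p`.
Hence the common subsequences are among `x` without position `i` and `x` without position `j`,
and both occur (and differ) exactly when `i < j` and each word shifted left on `[i, j]` agrees with
the other. Starting from `x[i] ≠ y[i]`, these two shifts say precisely that `y` is the complement
of `x` on `[i, j]` and that `x` alternates there.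
-/

namespace List

variable {α : Type*}

theorem Sublist.exists_eraseIdx_of_length_succ {z x : List α} (h : z <+ x)
    (hl : z.length + 1 = x.length) : ∃ p < x.length, x.eraseIdx p = z := by
  induction h with
  | slnil => simp at hl
  | @cons z l a h _ =>
    exact ⟨0, by simp, (h.eq_of_length (by simpa using hl)).symm⟩
  | @cons_cons z l a _ ih =>
    obtain ⟨p, hp, rfl⟩ := ih (by simpa using hl)
    exact ⟨p + 1, by simpa using hp, rfl⟩

theorem eraseIdx_eq_eraseIdx_iff_of_le {x y : List α} {p q : ℕ} (hpq : p ≤ q) :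
    x.eraseIdx p = y.eraseIdx q ↔
      (∀ k < p, x[k]? = y[k]?) ∧ (∀ k, p ≤ k → k < q → x[k + 1]? = y[k]?) ∧
        ∀ k, q < k → x[k]? = y[k]? := by
  refine ⟨fun h => ⟨fun k hk => ?_, fun k hpk hkq => ?_, fun k hqk => ?_⟩, fun ⟨hl, hm, hr⟩ => ?_⟩
  · simpa [getElem?_eraseIdx, hk, hk.trans_le hpq] using congrArg (·[k]?) h
  · simpa [getElem?_eraseIdx, hpk.not_gt, hkq] using congrArg (·[k]?) h
  · obtain ⟨k, rfl⟩ : ∃ m, k = m + 1 := ⟨k - 1, by omega⟩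
    simpa [getElem?_eraseIdx, (show ¬ k < p by omega), (show ¬ k < q by omega)]
      using congrArg (·[k]?) h
  · refine ext_getElem? fun k => ?_
    simp only [getElem?_eraseIdx]
    split_ifs with hkp hkq hkq
    · exact hl k hkp
    · omega
    · exact hm k (not_lt.1 hkp) hkq
    · exact hr (k + 1) (by omega)

theorem lt_length_of_getElem?_ne {x y : List α} {k : ℕ} (hlen : x.length = y.length)
    (hk : x[k]? ≠ y[k]?) : k < x.length := by
  by_contra hk'
  exact hk (by rw [getElem?_eq_none (by omega), getElem?_eq_none (by omega)])

theorem take_append_drop_take_append_drop (l : List α) {i j : ℕ} (hij : i ≤ j) :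
    l.take i ++ (l.take j).drop i ++ l.drop j = l := by
  have : (l.take j).take i = l.take i := by rw [take_take, min_eq_left hij]
  rw [← this, take_append_drop, take_append_drop]

end List

theorem Option.map_not_map_not (o : Option Bool) : (o.map not).map not = o := by
  simp [Option.map_map, Function.comp_def]

theorem Option.ne_map_not {o : Option Bool} (ho : o ≠ none) : o ≠ o.map not := by
  cases o <;> simp_all

theorem Option.eq_map_not_of_ne {o o' : Option Bool} (ho : o ≠ none) (ho' : o' ≠ none)
    (h : o ≠ o') : o' = o.map not := by
  cases o <;> cases o' <;> simp_all [Bool.eq_not_iff, ne_comm]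

theorem isChain_ne_iff_getElem? {a : List Bool} :
    a.IsChain (· ≠ ·) ↔ ∀ m, m + 1 < a.length → a[m + 1]? = a[m]?.map not := by
  rw [List.isChain_iff_getElem]
  refine forall_congr' fun m => forall_congr' fun hm => ?_
  simp [List.getElem?_eq_getElem hm, List.getElem?_eq_getElem (Nat.lt_of_succ_lt hm),
    Bool.eq_not_iff, ne_comm]

theorem mem_deletionBall_one_iff {x z : List Bool} :
    z ∈ deletionBall 1 x ↔ ∃ p < x.length, x.eraseIdx p = z := by
  refine ⟨fun ⟨hs, hl⟩ => hs.exists_eraseIdx_of_length_succ hl, ?_⟩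
  rintro ⟨p, hp, rfl⟩
  exact ⟨List.eraseIdx_sublist _ _, by rw [List.length_eraseIdx_of_lt hp]; omega⟩

structure DiffSpan (x y : List Bool) (i j : ℕ) : Prop where
  ne_left : x[i]? ≠ y[i]?
  ne_right : x[j]? ≠ y[j]?
  eq_outside : ∀ k, k < i ∨ j < k → x[k]? = y[k]?

namespace DiffSpan

variable {x y : List Bool} {i j : ℕ}

theorem le (h : DiffSpan x y i j) : i ≤ j :=
  not_lt.1 fun hji => h.ne_left (h.eq_outside i (Or.inr hji))

theorem unique {i' j' : ℕ} (h : DiffSpan x y i j) (h' : DiffSpan x y i' j') :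
    i = i' ∧ j = j' := by
  refine ⟨le_antisymm ?_ ?_, le_antisymm ?_ ?_⟩
  all_goals
    by_contra hc
    first
    | exact h.ne_left (h'.eq_outside _ (by omega))
    | exact h.ne_right (h'.eq_outside _ (by omega))
    | exact h'.ne_left (h.eq_outside _ (by omega))
    | exact h'.ne_right (h.eq_outside _ (by omega))

end DiffSpan

theorem exists_diffSpan {x y : List Bool} (hlen : x.length = y.length) (hxy : x ≠ y) :
    ∃ i j, DiffSpan x y i j := by
  set S := (Finset.range x.length).filter fun k => x[k]? ≠ y[k]?
  have hS : ∀ k, k ∈ S ↔ x[k]? ≠ y[k]? := fun k => by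
    simpa [S] using fun hk => List.lt_length_of_getElem?_ne hlen hk
  have hne : S.Nonempty := by
    by_contra hempty
    exact hxy (List.ext_getElem? fun k => by
      by_contra hk
      exact hempty ⟨k, (hS k).2 hk⟩)
  refine ⟨S.min' hne, S.max' hne, (hS _).1 (S.min'_mem hne), (hS _).1 (S.max'_mem hne),
    fun k hk => ?_⟩
  by_contra hk'
  rcases hk with hk | hk
  · exact (S.min'_le k ((hS k).2 hk')).not_gt hk
  · exact (S.le_max' k ((hS k).2 hk')).not_gt hk

theorem mem_inter_deletionBall_one_iff {x y z : List Bool} {i j : ℕ}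
    (hlen : x.length = y.length) (h : DiffSpan x y i j) :
    z ∈ deletionBall 1 x ∩ deletionBall 1 y ↔
      ((∀ k, i ≤ k → k < j → x[k + 1]? = y[k]?) ∧ z = x.eraseIdx i) ∨
        ((∀ k, i ≤ k → k < j → y[k + 1]? = x[k]?) ∧ z = x.eraseIdx j) := by
  have hi := List.lt_length_of_getElem?_ne hlen h.ne_left
  have hj := List.lt_length_of_getElem?_ne hlen h.ne_right
  have hij := h.le
  simp only [Set.mem_inter_iff, mem_deletionBall_one_iff]
  constructor
  · rintro ⟨⟨p, -, rfl⟩, ⟨q, -, hq⟩⟩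
    rcases le_total p q with hpq | hqp
    · obtain ⟨hl, hm, hr⟩ := (List.eraseIdx_eq_eraseIdx_iff_of_le hpq).1 hq.symm
      have hpi : p ≤ i := not_lt.1 fun hip => h.ne_left (hl i hip)
      have hjq : j ≤ q := not_lt.1 fun hqj => h.ne_right (hr j hqj)
      refine .inl ⟨fun k hik hkj => hm k (by omega) (by omega), ?_⟩
      -- `x` is constant on `[p, i]`, so deleting at `p` or at `i` gives the same word
      refine (List.eraseIdx_eq_eraseIdx_iff_of_le hpi).2
        ⟨fun _ _ => rfl, fun k hpk hki => ?_, fun _ _ => rfl⟩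
      rw [hm k hpk (by omega), h.eq_outside k (.inl hki)]
    · obtain ⟨hl, hm, hr⟩ := (List.eraseIdx_eq_eraseIdx_iff_of_le hqp).1 hq
      have hqi : q ≤ i := not_lt.1 fun hiq => h.ne_left (hl i hiq).symm
      have hjp : j ≤ p := not_lt.1 fun hpj => h.ne_right (hr j hpj).symm
      refine .inr ⟨fun k hik hkj => hm k (by omega) (by omega), ?_⟩
      refine ((List.eraseIdx_eq_eraseIdx_iff_of_le hjp).2
        ⟨fun _ _ => rfl, fun k hjk hkp => ?_, fun _ _ => rfl⟩).symm
      rw [h.eq_outside (k + 1) (.inr (by omega)), hm k (by omega) hkp]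
  · have hy : ∀ k, k < i ∨ j < k → y[k]? = x[k]? := fun k hk => (h.eq_outside k hk).symm
    rintro (⟨hm, rfl⟩ | ⟨hm, rfl⟩)
    · refine ⟨⟨i, hi, rfl⟩, j, hlen ▸ hj, ?_⟩
      exact ((List.eraseIdx_eq_eraseIdx_iff_of_le hij).2 ⟨fun k hk => h.eq_outside k (.inl hk),
        hm, fun k hk => h.eq_outside k (.inr hk)⟩).symm
    · refine ⟨⟨j, hj, rfl⟩, i, hlen ▸ hi, ?_⟩
      exact (List.eraseIdx_eq_eraseIdx_iff_of_le hij).2 ⟨fun k hk => hy k (.inl hk),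
        hm, fun k hk => hy k (.inr hk)⟩

theorem ncard_inter_deletionBall_one_eq_two_iff {x y : List Bool} {i j : ℕ}
    (hlen : x.length = y.length) (h : DiffSpan x y i j) :
    (deletionBall 1 x ∩ deletionBall 1 y).ncard = 2 ↔
      i < j ∧ (∀ k, i ≤ k → k < j → x[k + 1]? = y[k]?) ∧
        ∀ k, i ≤ k → k < j → y[k + 1]? = x[k]? := by
  have hmem := fun z => mem_inter_deletionBall_one_iff (z := z) hlen h
  constructor
  · rw [Set.ncard_eq_two]
    rintro ⟨z₁, z₂, hne, hS⟩
    have h₁ := (hmem z₁).1 (hS ▸ Set.mem_insert _ _)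
    have h₂ := (hmem z₂).1 (hS ▸ Set.mem_insert_of_mem _ rfl)
    rcases h₁ with ⟨hl₁, rfl⟩ | ⟨hr₁, rfl⟩ <;> rcases h₂ with ⟨hl₂, rfl⟩ | ⟨hr₂, rfl⟩
    · exact absurd rfl hne
    · exact ⟨lt_of_le_of_ne h.le fun hij => hne (hij ▸ rfl), hl₁, hr₂⟩
    · exact ⟨lt_of_le_of_ne h.le fun hij => hne (hij ▸ rfl), hl₂, hr₁⟩
    · exact absurd rfl hne
  · rintro ⟨hij, hl, hr⟩
    have hS : deletionBall 1 x ∩ deletionBall 1 y = {x.eraseIdx i, x.eraseIdx j} := by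
      ext z
      rw [hmem, and_iff_right hl, and_iff_right hr]
      rfl
    rw [hS]
    refine Set.ncard_pair fun heq => h.ne_left ?_
    have := congrArg (·[i]?) heq
    simp only [List.getElem?_eraseIdx, lt_irrefl, hij, if_true, if_false] at this
    rw [← this, hl i le_rfl hij]

theorem TypeAConfusable.diffSpan_and_shifts {x y : List Bool} (h : TypeAConfusable x y) :
    ∃ i j, DiffSpan x y i j ∧ i < j ∧ (∀ k, i ≤ k → k < j → x[k + 1]? = y[k]?) ∧
      ∀ k, i ≤ k → k < j → y[k + 1]? = x[k]? := by
  obtain ⟨u, a, v, ha, hchain, rfl, rfl⟩ := h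
  have halt := isChain_ne_iff_getElem?.1 hchain
  have hout : ∀ k, k < u.length ∨ u.length + a.length ≤ k →
      (u ++ a ++ v)[k]? = (u ++ a.map (!·) ++ v)[k]? := by
    rintro k (hk | hk)
    · simp [List.getElem?_append, hk]
    · simp [List.getElem?_append, show ¬ k < u.length by omega,
        show ¬ k - u.length < a.length by omega]
  have hmid : ∀ m < a.length, (u ++ a ++ v)[u.length + m]? = a[m]? ∧
      (u ++ a.map (!·) ++ v)[u.length + m]? = a[m]?.map (!·) := by
    intro m hm
    simp [List.getElem?_append, hm]
  have hspan : DiffSpan (u ++ a ++ v) (u ++ a.map (!·) ++ v) u.length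
      (u.length + (a.length - 1)) := by
    refine ⟨?_, ?_, fun k hk => hout k (by omega)⟩
    · rw [← add_zero u.length, (hmid 0 (by omega)).1, (hmid 0 (by omega)).2]
      exact Option.ne_map_not (by rw [Ne, List.getElem?_eq_none_iff]; omega)
    · rw [(hmid _ (by omega)).1, (hmid _ (by omega)).2]
      exact Option.ne_map_not (by rw [Ne, List.getElem?_eq_none_iff]; omega)
  refine ⟨_, _, hspan, by omega, fun k hk hk' => ?_, fun k hk hk' => ?_⟩
  all_goals
    obtain ⟨m, rfl⟩ : ∃ m, k = u.length + m := ⟨k - u.length, by omega⟩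
    obtain ⟨hx₁, hy₁⟩ := hmid (m + 1) (by omega)
    obtain ⟨hx₀, hy₀⟩ := hmid m (by omega)
    rw [add_assoc]
  · rw [hx₁, hy₀, halt m (by omega)]
  · rw [hy₁, hx₀, halt m (by omega)]
    exact Option.map_not_map_not _

theorem DiffSpan.typeAConfusable {x y : List Bool} {i j : ℕ} (hlen : x.length = y.length)
    (h : DiffSpan x y i j) (hij : i < j) (hxy : ∀ k, i ≤ k → k < j → x[k + 1]? = y[k]?)
    (hyx : ∀ k, i ≤ k → k < j → y[k + 1]? = x[k]?) : TypeAConfusable x y := by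
  have hj := List.lt_length_of_getElem?_ne hlen h.ne_right
  have hflip : ∀ k, i ≤ k → k ≤ j → y[k]? = x[k]?.map not := by
    intro k hik
    induction k, hik using Nat.le_induction with
    | base =>
      exact fun _ => Option.eq_map_not_of_ne (by rw [Ne, List.getElem?_eq_none_iff]; omega)
        (by rw [Ne, List.getElem?_eq_none_iff]; omega) h.ne_left
    | succ k hik ih =>
      intro hkj
      rw [hyx k hik (by omega), hxy k hik (by omega), ih (by omega), Option.map_not_map_not]
  have hblock :
      ∀ m, ((x.take (j + 1)).drop i)[m]? = if m < j + 1 - i then x[i + m]? else none := by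
    intro m
    rw [List.getElem?_drop, List.getElem?_take]
    exact if_congr (by omega) rfl rfl
  refine ⟨x.take i, (x.take (j + 1)).drop i, x.drop (j + 1), ?_, ?_,
    (x.take_append_drop_take_append_drop (by omega)).symm, ?_⟩
  · simp only [List.length_drop, List.length_take]
    omega
  · refine isChain_ne_iff_getElem?.2 fun m hm => ?_
    simp only [List.length_drop, List.length_take] at hm
    rw [hblock, hblock, if_pos (by omega), if_pos (by omega), ← add_assoc,
      hxy _ (by omega) (by omega), hflip _ (by omega) (by omega)]
  · rw [← y.take_append_drop_take_append_drop (show i ≤ j + 1 by omega)]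
    refine congrArg₂ (· ++ ·) (congrArg₂ (· ++ ·) ?_ ?_) ?_
    · refine List.ext_getElem? fun k => ?_
      rw [List.getElem?_take, List.getElem?_take]
      split_ifs with hk
      · exact (h.eq_outside k (.inl hk)).symm
      · rfl
    · refine List.ext_getElem? fun m => ?_
      rw [List.getElem?_map, hblock, List.getElem?_drop, List.getElem?_take]
      split_ifs with hm hm'
      · exact hflip _ (by omega) (by omega)
      · omega
      · omega
      · rfl
    · refine List.ext_getElem? fun k => ?_
      rw [List.getElem?_drop, List.getElem?_drop]
      exact (h.eq_outside _ (.inr (by omega))).symm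

theorem typeAConfusable_iff {x y : List Bool} {i j : ℕ} (hlen : x.length = y.length)
    (h : DiffSpan x y i j) :
    TypeAConfusable x y ↔
      i < j ∧ (∀ k, i ≤ k → k < j → x[k + 1]? = y[k]?) ∧
        ∀ k, i ≤ k → k < j → y[k + 1]? = x[k]? := by
  refine ⟨fun hA => ?_, fun ⟨hij, hxy, hyx⟩ => h.typeAConfusable hlen hij hxy hyx⟩
  obtain ⟨i', j', h', hshifts⟩ := hA.diffSpan_and_shifts
  obtain ⟨rfl, rfl⟩ := h.unique h'
  exact hshifts

theorem stmt4_general (n : ℕ) (x y : List Bool)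
    (hx : x.length = n) (hy : y.length = n) (hxy : x ≠ y) :
    (deletionBall 1 x ∩ deletionBall 1 y).ncard = 2 ↔ TypeAConfusable x y := by
  have hlen : x.length = y.length := hx.trans hy.symm
  obtain ⟨i, j, hspan⟩ := exists_diffSpan hlen hxy
  rw [ncard_inter_deletionBall_one_eq_two_iff hlen hspan, typeAConfusable_iff hlen hspan]

theorem stmt4 (n : ℕ) (hn : 1 ≤ n) (x y : List Bool)
    (hx : x.length = n) (hy : y.length = n) (hxy : x ≠ y) :
    (deletionBall 1 x ∩ deletionBall 1 y).ncard = 2 ↔ TypeAConfusable x y :=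
  stmt4_general n x y hx hy hxy
end

section
/- Fix ℓ ≥ 1 and n with 2ℓ ≤ n, set m = ⌊n/(2ℓ)⌋ and q = 1 − 2ℓ/2^{2ℓ}. Then every (n, 2; D_1)-reconstruction code C ⊆ {0,1}^n satisfies |C| ≤ 2^n · ( q^m + (1/ℓ)·(1 − q^m) ). -/
/-- `C` is an `(n, N; D_t)`-reconstruction code. -/
def IsReconCode (n N t : ℕ) (C : Set (List Bool)) : Prop :=
  (∀ x ∈ C, x.length = n) ∧
  ∀ x ∈ C, ∀ y ∈ C, x ≠ y → (deletionBall t x ∩ deletionBall t y).ncard < N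

/-!
Cut a word of length `n` into `m = ⌊n/2ℓ⌋` blocks of length `2ℓ` and a tail, and call the `2ℓ`
words `(b b̄)^i (b̄ b)^(ℓ-1-i) b̄ b̄` (`b ∈ {0,1}`, `i < ℓ`) patterns. Two words that differ only in
the index `i` of one pattern block share the two distinct subsequences obtained by deleting a
letter of that block, so a code with `|D₁(x) ∩ D₁(y)| < 2` contains at most one of the `ℓ` words
obtained from each other by changing the index of the first pattern block. Hence the code holds at
most `1/ℓ` of the `2^n (1 - q^m)` words having a pattern block, plus at most all
`(2^(2ℓ) - 2ℓ)^m 2^(n - 2ℓm) = 2^n q^m` words having none.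
-/

namespace ReconCode

open List Finset

def alt (b : Bool) : ℕ → List Bool
  | 0 => []
  | k + 1 => b :: (!b) :: alt b k

@[simp] lemma alt_zero (b : Bool) : alt b 0 = [] := rfl

@[simp] lemma alt_succ (b : Bool) (k : ℕ) : alt b (k + 1) = b :: (!b) :: alt b k := rfl

@[simp] lemma length_alt (b : Bool) (k : ℕ) : (alt b k).length = 2 * k := by
  induction k with
  | zero => rfl
  | succ k ih => simp [ih]; omega

@[simp] lemma count_alt (b c : Bool) (k : ℕ) : (alt c k).count b = k := by
  induction k with
  | zero => rfl
  | succ k ih => cases b <;> cases c <;> simp_all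

lemma alt_add (b : Bool) (i j : ℕ) : alt b (i + j) = alt b i ++ alt b j := by
  induction i with
  | zero => simp
  | succ i ih => simp [Nat.succ_add, ih]

lemma alt_not_append (b : Bool) (k : ℕ) : alt (!b) k ++ [!b] = (!b) :: alt b k := by
  induction k with
  | zero => simp
  | succ k ih => simp [ih]

lemma getElem?_alt_two_mul {b : Bool} {i k : ℕ} (h : i < k) : (alt b k)[2 * i]? = some b := by
  induction k generalizing i with
  | zero => omega
  | succ k ih =>
    cases i with
    | zero => simp
    | succ i => simpa [Nat.mul_succ] using ih (by omega)

-- The patterns of length `2ℓ` are `pattern (ℓ - 1) b i` for `i ≤ ℓ - 1`.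
def pattern (r : ℕ) (b : Bool) (i : ℕ) : List Bool := alt b i ++ alt (!b) (r - i) ++ [!b, !b]

lemma length_pattern {r i : ℕ} (h : i ≤ r) (b : Bool) :
    (pattern r b i).length = 2 * (r + 1) := by
  simp [pattern]; omega

lemma getLast?_pattern (r : ℕ) (b : Bool) (i : ℕ) : (pattern r b i).getLast? = some !b := by
  simp [pattern, getLast?_append]

lemma getElem?_pattern_two_mul_self {r i : ℕ} (h : i ≤ r) (b : Bool) :
    (pattern r b i)[2 * i]? = some !b := by
  obtain ⟨s, rfl⟩ := Nat.exists_eq_add_of_le h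
  cases s <;> simp [pattern, append_assoc]

lemma getElem?_pattern_two_mul_of_lt {r i j : ℕ} (hij : i < j) (b : Bool) :
    (pattern r b j)[2 * i]? = some b := by
  rw [pattern, append_assoc, getElem?_append_left (by simp; omega)]
  exact getElem?_alt_two_mul hij

lemma eq_and_eq_of_pattern_eq {r i j : ℕ} {b b' : Bool} (hi : i ≤ r) (hj : j ≤ r)
    (h : pattern r b i = pattern r b' j) : b = b' ∧ i = j := by
  have hb : b = b' := by
    have := (getLast?_pattern r b i).symm.trans (h ▸ getLast?_pattern r b' j)
    exact Bool.not_inj (Option.some_injective _ this)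
  subst hb
  refine ⟨rfl, ?_⟩
  by_contra hne
  rcases Nat.lt_or_gt_of_ne hne with hlt | hlt
  · simpa [h, getElem?_pattern_two_mul_of_lt hlt] using getElem?_pattern_two_mul_self hi b
  · simpa [← h, getElem?_pattern_two_mul_of_lt hlt] using getElem?_pattern_two_mul_self hj b

lemma alt_append_sublist_pattern {r i : ℕ} (h : i ≤ r) (b : Bool) :
    alt b r ++ [!b] <+ pattern r b i := by
  obtain ⟨s, rfl⟩ := Nat.exists_eq_add_of_le h
  have : pattern (i + s) b i = alt b i ++ ((!b) :: alt b s) ++ [!b] := by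
    simp [pattern, ← alt_not_append]
  rw [this, alt_add]
  exact ((sublist_cons_self _ _).append_left _).append_right _

-- For `i < j`: `pattern r b j` without its letter `b` at position `2i`, and also `pattern r b i`
-- without its letter `b` at position `2j - 1`.
def crossing (r : ℕ) (b : Bool) (i j : ℕ) : List Bool :=
  alt b i ++ ((!b) :: alt b (j - i - 1)) ++ alt (!b) (r - j) ++ [!b, !b]

lemma crossing_sublist_pattern_left {r i j : ℕ} (hij : i < j) (hjr : j ≤ r) (b : Bool) :
    crossing r b i j <+ pattern r b i := by
  obtain ⟨d, rfl⟩ : ∃ d, j = i + d + 1 := ⟨j - i - 1, by omega⟩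
  obtain ⟨s, rfl⟩ := Nat.exists_eq_add_of_le hjr
  have hd : alt (!b) (d + 1) = ((!b) :: alt b d) ++ [b] := by
    simpa using (alt_not_append (!b) (d + 1)).symm
  rw [crossing, pattern, show i + d + 1 + s - i = (d + 1) + s by omega, alt_add, hd,
    show i + d + 1 - i - 1 = d by omega, show i + d + 1 + s - (i + d + 1) = s by omega]
  simp only [append_assoc]
  exact ((sublist_append_right [b] _).append_left _).append_left _

lemma crossing_sublist_pattern_right {r i j : ℕ} (hij : i < j) (hjr : j ≤ r) (b : Bool) :
    crossing r b i j <+ pattern r b j := by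
  obtain ⟨d, rfl⟩ : ∃ d, j = i + d + 1 := ⟨j - i - 1, by omega⟩
  rw [crossing, pattern, show i + d + 1 - i - 1 = d by omega, show i + d + 1 = i + (d + 1) by omega,
    alt_add, alt_succ]
  simp only [append_assoc, cons_append]
  exact (sublist_cons_self _ _).append_left _

lemma count_crossing {r i j : ℕ} (hij : i < j) (hjr : j ≤ r) (b : Bool) :
    (crossing r b i j).count b = r - 1 := by
  cases b <;> simp [crossing] <;> omega

lemma deletionBall_finite (t : ℕ) (x : List Bool) : (deletionBall t x).Finite :=
  x.sublists.toFinset.finite_toSet.subset fun _ hz => by simpa using hz.1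

lemma two_le_ncard_inter_deletionBall {t : ℕ} {x y z₁ z₂ : List Bool} (hne : z₁ ≠ z₂)
    (h₁ : z₁ ∈ deletionBall t x ∩ deletionBall t y)
    (h₂ : z₂ ∈ deletionBall t x ∩ deletionBall t y) :
    2 ≤ (deletionBall t x ∩ deletionBall t y).ncard := by
  rw [← Set.ncard_pair hne]
  exact Set.ncard_le_ncard (Set.insert_subset h₁ (Set.singleton_subset_iff.2 h₂))
    ((deletionBall_finite t x).inter_of_left _)

lemma append_mem_deletionBall {t : ℕ} {z p : List Bool} (h : z ∈ deletionBall t p)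
    (u v : List Bool) : u ++ z ++ v ∈ deletionBall t (u ++ p ++ v) :=
  ⟨(h.1.append_left u).append_right v, by simp only [length_append]; have := h.2; omega⟩

lemma append_mem_inter_deletionBall {t : ℕ} {z p p' : List Bool}
    (h : z ∈ deletionBall t p ∩ deletionBall t p') (u v : List Bool) :
    u ++ z ++ v ∈ deletionBall t (u ++ p ++ v) ∩ deletionBall t (u ++ p' ++ v) :=
  ⟨append_mem_deletionBall h.1 u v, append_mem_deletionBall h.2 u v⟩

lemma exists_ne_mem_inter_deletionBall_pattern {r i j : ℕ} (hij : i < j) (hjr : j ≤ r)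
    (b : Bool) : ∃ z₁ z₂, z₁ ≠ z₂ ∧
      z₁ ∈ deletionBall 1 (pattern r b i) ∩ deletionBall 1 (pattern r b j) ∧
      z₂ ∈ deletionBall 1 (pattern r b i) ∩ deletionBall 1 (pattern r b j) := by
  have hi : i ≤ r := by omega
  refine ⟨alt b r ++ [!b], crossing r b i j, fun h => ?_,
    ⟨⟨alt_append_sublist_pattern hi b, by simp [length_pattern hi]; omega⟩,
      ⟨alt_append_sublist_pattern hjr b, by simp [length_pattern hjr]; omega⟩⟩,
    ⟨⟨crossing_sublist_pattern_left hij hjr b, by simp [crossing, length_pattern hi]; omega⟩,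
      ⟨crossing_sublist_pattern_right hij hjr b,
        by simp [crossing, length_pattern hjr]; omega⟩⟩⟩
  have := congrArg (count b) h
  rw [count_crossing hij hjr] at this
  cases b <;> simp at this <;> omega

lemma eq_of_pattern_mem_reconCode {n r i j : ℕ} {b : Bool} {C : Set (List Bool)}
    (hC : IsReconCode n 2 1 C) (u v : List Bool) (hi : i ≤ r) (hj : j ≤ r)
    (hiC : u ++ pattern r b i ++ v ∈ C) (hjC : u ++ pattern r b j ++ v ∈ C) : i = j := by
  wlog hij : i < j generalizing i j
  · rcases Nat.lt_or_ge j i with hji | hji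
    · exact (this hj hi hjC hiC hji).symm
    · omega
  obtain ⟨z₁, z₂, hne, h₁, h₂⟩ := exists_ne_mem_inter_deletionBall_pattern hij hj b
  have hcommon := two_le_ncard_inter_deletionBall (fun h => hne (by simpa using h))
    (append_mem_inter_deletionBall h₁ u v) (append_mem_inter_deletionBall h₂ u v)
  have := hC.2 _ hiC _ hjC fun h => hij.ne (eq_and_eq_of_pattern_eq hi hj (by simpa using h)).2
  omega

def words (n : ℕ) : Finset (List Bool) :=
  (univ : Finset (List.Vector Bool n)).map ⟨List.Vector.toList, List.Vector.toList_injective⟩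

@[simp] lemma mem_words {n : ℕ} {x : List Bool} : x ∈ words n ↔ x.length = n := by
  simp only [words, Finset.mem_map, mem_univ, true_and, Function.Embedding.coeFn_mk]
  exact ⟨fun ⟨v, hv⟩ => hv ▸ v.2, fun h => ⟨⟨x, h⟩, rfl⟩⟩

@[simp] lemma card_words (n : ℕ) : #(words n) = 2 ^ n := by
  simp [words, card_vector]

lemma ncard_eq_card_filter_words {n : ℕ} {C : Set (List Bool)} [DecidablePred (· ∈ C)]
    (hC : ∀ x ∈ C, x.length = n) : C.ncard = #{x ∈ words n | x ∈ C} := by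
  rw [← Set.ncard_coe_finset]
  congr 1
  ext x
  simp only [coe_filter, mem_words, Set.mem_ofPred_eq]
  exact ⟨fun hx => ⟨hC x hx, hx⟩, And.right⟩

lemma card_filter_words_add (a b : ℕ) (p q : List Bool → Prop) [DecidablePred p]
    [DecidablePred q] :
    #{x ∈ words (a + b) | p (x.take a) ∧ q (x.drop a)} =
      #{x ∈ words a | p x} * #{y ∈ words b | q y} := by
  rw [← card_product]
  refine card_nbij' (fun x => (x.take a, x.drop a)) (fun yz => yz.1 ++ yz.2) ?_ ?_ ?_ ?_
  · intro x hx
    simp_all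
  · rintro ⟨y, z⟩ h
    simp_all
  · intro x _
    exact take_append_drop a x
  · rintro ⟨y, z⟩ h
    simp_all

def blockAt (L i : ℕ) (x : List Bool) : List Bool := (x.drop (L * i)).take L

lemma blockAt_zero (L : ℕ) (x : List Bool) : blockAt L 0 x = x.take L := by
  simp [blockAt]

lemma blockAt_succ (L i : ℕ) (x : List Bool) : blockAt L (i + 1) x = blockAt L i (x.drop L) := by
  simp [blockAt, drop_drop, Nat.mul_succ, Nat.add_comm]

lemma card_words_avoiding (L : ℕ) (P : Finset (List Bool)) (hP : P ⊆ words L) (k t : ℕ) :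
    #{x ∈ words (L * k + t) | ∀ i < k, blockAt L i x ∉ P} = (2 ^ L - #P) ^ k * 2 ^ t := by
  induction k with
  | zero => simp
  | succ k ih =>
    have hsplit : ∀ x : List Bool, (∀ i < k + 1, blockAt L i x ∉ P) ↔
        x.take L ∉ P ∧ ∀ i < k, blockAt L i (x.drop L) ∉ P := by
      intro x
      simp only [Nat.forall_lt_succ_left, blockAt_zero, blockAt_succ]
    have hfree : #{x ∈ words L | x ∉ P} = 2 ^ L - #P := by
      rw [filter_not, filter_mem_eq_inter, inter_eq_right.2 hP, card_sdiff_of_subset hP, card_words]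
    simp_rw [hsplit, show L * (k + 1) + t = L + (L * k + t) by ring]
    rw [card_filter_words_add L (L * k + t) (· ∉ P) (fun y => ∀ i < k, blockAt L i y ∉ P), hfree,
      ih, pow_succ]
    ring

def replaceBlock (L k : ℕ) (p x : List Bool) : List Bool :=
  x.take (L * k) ++ p ++ x.drop (L * k + L)

section replaceBlock

variable {L k : ℕ} {p x : List Bool}

lemma length_replaceBlock (hp : p.length = L) (hx : L * k + L ≤ x.length) :
    (replaceBlock L k p x).length = x.length := by
  simp [replaceBlock, hp]; omega

lemma blockAt_replaceBlock_of_lt {i : ℕ} (hik : i < k) (hx : L * k + L ≤ x.length) :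
    blockAt L i (replaceBlock L k p x) = blockAt L i x := by
  have hi : L * i + L ≤ L * k := by nlinarith
  rw [blockAt, replaceBlock, append_assoc, drop_append, take_append, length_drop, length_take,
    min_eq_left (by omega), show L - (L * k - L * i) = 0 by omega, take_zero, append_nil,
    drop_take, take_take, min_eq_left (by omega), blockAt]

lemma blockAt_replaceBlock_self (hp : p.length = L) (hx : L * k + L ≤ x.length) :
    blockAt L k (replaceBlock L k p x) = p := by
  have : (x.take (L * k)).length = L * k := by simp; omega
  simp [blockAt, replaceBlock, this, hp]

lemma replaceBlock_blockAt_self : replaceBlock L k (blockAt L k x) x = x := by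
  rw [replaceBlock, blockAt, append_assoc, ← drop_drop, take_append_drop, take_append_drop]

lemma replaceBlock_eq_replaceBlock_iff {p' x' : List Bool} (hp : p.length = p'.length)
    (hx : L * k ≤ x.length) (hx' : L * k ≤ x'.length) :
    replaceBlock L k p x = replaceBlock L k p' x' ↔
      p = p' ∧ ∀ q, replaceBlock L k q x = replaceBlock L k q x' := by
  have hlen : (x.take (L * k)).length = (x'.take (L * k)).length := by simp; omega
  simp only [replaceBlock, append_assoc]
  constructor
  · intro h
    obtain ⟨htake, hrest⟩ := append_inj h hlen
    obtain ⟨hp, hdrop⟩ := append_inj hrest hp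
    exact ⟨hp, fun q => by rw [htake, hdrop]⟩
  · rintro ⟨rfl, h⟩
    exact h p

end replaceBlock

def patterns (r : ℕ) : Finset (List Bool) :=
  (univ ×ˢ Finset.range (r + 1)).image fun bi => pattern r bi.1 bi.2

lemma mem_patterns {r : ℕ} {p : List Bool} :
    p ∈ patterns r ↔ ∃ b, ∃ i ≤ r, pattern r b i = p := by
  simp [patterns]

lemma patterns_subset_words (r : ℕ) : patterns r ⊆ words (2 * (r + 1)) := by
  intro p hp
  obtain ⟨b, i, hi, rfl⟩ := mem_patterns.1 hp
  exact mem_words.2 (length_pattern hi b)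

lemma card_patterns (r : ℕ) : #(patterns r) = 2 * (r + 1) := by
  rw [patterns, card_image_of_injOn, card_product, card_univ, Fintype.card_bool, card_range]
  rintro ⟨b, i⟩ hi ⟨b', j⟩ hj h
  simp only [coe_product, coe_univ, coe_range, Set.mem_prod, Set.mem_univ, Set.mem_Iio,
    true_and] at hi hj
  obtain ⟨rfl, rfl⟩ := eq_and_eq_of_pattern_eq (by omega) (by omega) h
  rfl

def patternBit (p : List Bool) : Bool := !(p.getLast?.getD true)

@[simp] lemma patternBit_pattern (r : ℕ) (b : Bool) (i : ℕ) :
    patternBit (pattern r b i) = b := by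
  simp [patternBit, getLast?_pattern]

def HasPatternBlock (r m : ℕ) (x : List Bool) : Prop :=
  ∃ k < m, blockAt (2 * (r + 1)) k x ∈ patterns r

instance (r m : ℕ) : DecidablePred (HasPatternBlock r m) :=
  fun _ => inferInstanceAs (Decidable (∃ _, _))

def firstPatternBlock (r m : ℕ) (x : List Bool) : ℕ :=
  if h : HasPatternBlock r m x then Nat.find h else 0

section firstPatternBlock

variable {r m : ℕ} {x : List Bool}

lemma firstPatternBlock_spec (h : HasPatternBlock r m x) :
    firstPatternBlock r m x < m ∧
      blockAt (2 * (r + 1)) (firstPatternBlock r m x) x ∈ patterns r ∧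
      ∀ i < firstPatternBlock r m x, blockAt (2 * (r + 1)) i x ∉ patterns r := by
  rw [firstPatternBlock, dif_pos h]
  exact ⟨(Nat.find_spec h).1, (Nat.find_spec h).2, fun i hi hP =>
    Nat.find_min h hi ⟨by have := (Nat.find_spec h).1; omega, hP⟩⟩

lemma firstPatternBlock_eq {k : ℕ} (hkm : k < m) (hk : blockAt (2 * (r + 1)) k x ∈ patterns r)
    (hmin : ∀ i < k, blockAt (2 * (r + 1)) i x ∉ patterns r) : firstPatternBlock r m x = k := by
  obtain ⟨-, hfirst, hfirst_min⟩ := firstPatternBlock_spec (r := r) ⟨k, hkm, hk⟩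
  rcases lt_trichotomy (firstPatternBlock r m x) k with hlt | heq | hgt
  · exact absurd hfirst (hmin _ hlt)
  · exact heq
  · exact absurd hk (hfirst_min _ hgt)

lemma add_le_length_of_hasPatternBlock {n : ℕ} (hm : 2 * (r + 1) * m ≤ n) (hx : x.length = n)
    (h : HasPatternBlock r m x) :
    2 * (r + 1) * firstPatternBlock r m x + 2 * (r + 1) ≤ x.length := by
  have := Nat.mul_le_mul_left (2 * (r + 1)) (firstPatternBlock_spec h).1
  rw [Nat.mul_succ] at this
  omega

end firstPatternBlock

-- Replaces the first pattern block `pattern r b i` of `x` by `pattern r b j`.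
def variant (r m : ℕ) (x : List Bool) (j : ℕ) : List Bool :=
  replaceBlock (2 * (r + 1)) (firstPatternBlock r m x)
    (pattern r (patternBit (blockAt (2 * (r + 1)) (firstPatternBlock r m x) x)) j) x

section variant

variable {n r m : ℕ} {x : List Bool}

lemma length_variant (hm : 2 * (r + 1) * m ≤ n) (hx : x.length = n) (h : HasPatternBlock r m x)
    {j : ℕ} (hj : j ≤ r) : (variant r m x j).length = n := by
  rw [variant, length_replaceBlock (length_pattern hj _)
    (add_le_length_of_hasPatternBlock hm hx h), hx]

lemma blockAt_variant (hm : 2 * (r + 1) * m ≤ n) (hx : x.length = n) (h : HasPatternBlock r m x)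
    {j : ℕ} (hj : j ≤ r) :
    blockAt (2 * (r + 1)) (firstPatternBlock r m x) (variant r m x j) =
      pattern r (patternBit (blockAt (2 * (r + 1)) (firstPatternBlock r m x) x)) j :=
  blockAt_replaceBlock_self (length_pattern hj _) (add_le_length_of_hasPatternBlock hm hx h)

lemma firstPatternBlock_variant (hm : 2 * (r + 1) * m ≤ n) (hx : x.length = n)
    (h : HasPatternBlock r m x) {j : ℕ} (hj : j ≤ r) :
    firstPatternBlock r m (variant r m x j) = firstPatternBlock r m x := by
  obtain ⟨hkm, -, hmin⟩ := firstPatternBlock_spec h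
  refine firstPatternBlock_eq hkm ?_ fun i hi => ?_
  · rw [blockAt_variant hm hx h hj]
    exact mem_patterns.2 ⟨_, j, hj, rfl⟩
  · rw [variant, blockAt_replaceBlock_of_lt hi (add_le_length_of_hasPatternBlock hm hx h)]
    exact hmin i hi

lemma hasPatternBlock_variant (hm : 2 * (r + 1) * m ≤ n) (hx : x.length = n)
    (h : HasPatternBlock r m x) {j : ℕ} (hj : j ≤ r) : HasPatternBlock r m (variant r m x j) :=
  ⟨_, (firstPatternBlock_spec h).1, by
    rw [blockAt_variant hm hx h hj]
    exact mem_patterns.2 ⟨_, j, hj, rfl⟩⟩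

end variant

section code

variable {n r m : ℕ} {C : Set (List Bool)}

lemma eq_and_eq_of_variant_eq (hC : IsReconCode n 2 1 C) (hm : 2 * (r + 1) * m ≤ n)
    {x x' : List Bool} (hxC : x ∈ C) (hxC' : x' ∈ C) (h : HasPatternBlock r m x)
    (h' : HasPatternBlock r m x')
    {j j' : ℕ} (hj : j ≤ r) (hj' : j' ≤ r) (heq : variant r m x j = variant r m x' j') :
    x = x' ∧ j = j' := by
  have hx := hC.1 x hxC
  have hx' := hC.1 x' hxC'
  have hlen := add_le_length_of_hasPatternBlock hm hx h
  have hlen' := add_le_length_of_hasPatternBlock hm hx' h'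
  have hk : firstPatternBlock r m x' = firstPatternBlock r m x := by
    rw [← firstPatternBlock_variant hm hx' h' hj', ← heq, firstPatternBlock_variant hm hx h hj]
  obtain ⟨b, i, hi, hxi⟩ := mem_patterns.1 (firstPatternBlock_spec h).2.1
  obtain ⟨b', i', hi', hxi'⟩ := mem_patterns.1 (firstPatternBlock_spec h').2.1
  rw [hk] at hxi' hlen'
  rw [variant, variant, hk, ← hxi, ← hxi', patternBit_pattern, patternBit_pattern] at heq
  generalize firstPatternBlock r m x = k at hlen hlen' hxi hxi' heq
  rw [replaceBlock_eq_replaceBlock_iff (by rw [length_pattern hj, length_pattern hj'])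
      (by omega) (by omega)] at heq
  obtain ⟨hpat, hctx⟩ := heq
  obtain ⟨rfl, rfl⟩ := eq_and_eq_of_pattern_eq hj hj' hpat
  have hx_eq : x = replaceBlock (2 * (r + 1)) k (pattern r b i) x := by
    rw [hxi, replaceBlock_blockAt_self]
  have hx'_eq : x' = replaceBlock (2 * (r + 1)) k (pattern r b i') x := by
    rw [hctx, hxi', replaceBlock_blockAt_self]
  obtain rfl : i = i' := eq_of_pattern_mem_reconCode hC _ _ hi hi' (by rwa [hx_eq] at hxC)
    (by rwa [hx'_eq] at hxC')
  exact ⟨hx_eq.trans hx'_eq.symm, rfl⟩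

lemma card_mul_le_card_hasPatternBlock (hC : IsReconCode n 2 1 C) (hm : 2 * (r + 1) * m ≤ n)
    (S : Finset (List Bool)) (hS : ∀ x ∈ S, x ∈ C ∧ HasPatternBlock r m x) :
    #S * (r + 1) ≤ #{x ∈ words n | HasPatternBlock r m x} := by
  rw [← card_range (r + 1), ← card_product]
  refine card_le_card_of_injOn (fun xj => variant r m xj.1 xj.2) ?_ ?_
  · rintro ⟨x, j⟩ hxj
    simp only [coe_product, coe_range, Set.mem_prod, mem_coe, Set.mem_Iio] at hxj
    obtain ⟨hxC, h⟩ := hS x hxj.1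
    have hj : j ≤ r := by omega
    simp only [coe_filter, mem_words]
    exact ⟨length_variant hm (hC.1 x hxC) h hj, hasPatternBlock_variant hm (hC.1 x hxC) h hj⟩
  · rintro ⟨x, j⟩ hxj ⟨x', j'⟩ hxj' heq
    simp only [coe_product, coe_range, Set.mem_prod, mem_coe, Set.mem_Iio] at hxj hxj'
    obtain ⟨rfl, rfl⟩ := eq_and_eq_of_variant_eq hC hm (hS x hxj.1).1 (hS x' hxj'.1).1
      (hS x hxj.1).2 (hS x' hxj'.1).2 (by omega) (by omega) heq
    rfl

end code

lemma card_words_not_hasPatternBlock (n r : ℕ) :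
    #{x ∈ words n | ¬HasPatternBlock r (n / (2 * (r + 1))) x} =
      (2 ^ (2 * (r + 1)) - 2 * (r + 1)) ^ (n / (2 * (r + 1))) * 2 ^ (n % (2 * (r + 1))) := by
  have := card_words_avoiding _ _ (patterns_subset_words r) (n / (2 * (r + 1))) (n % (2 * (r + 1)))
  rw [card_patterns, Nat.div_add_mod] at this
  rw [← this]
  simp [HasPatternBlock]

lemma card_reconCode_mul_le {n : ℕ} {C : Set (List Bool)} [DecidablePred (· ∈ C)]
    (hC : IsReconCode n 2 1 C) (r : ℕ) :
    #{x ∈ words n | x ∈ C} * (r + 1) ≤ 2 ^ n +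
      r * ((2 ^ (2 * (r + 1)) - 2 * (r + 1)) ^ (n / (2 * (r + 1))) * 2 ^ (n % (2 * (r + 1)))) := by
  rw [← card_words_not_hasPatternBlock]
  set m := n / (2 * (r + 1))
  rw [← card_filter_add_card_filter_not (p := HasPatternBlock r m)]
  have hwith := card_mul_le_card_hasPatternBlock (r := r) (m := m) hC (Nat.mul_div_le n _)
    {x ∈ {x ∈ words n | x ∈ C} | HasPatternBlock r m x} fun x hx => by simp_all
  have hwithout : #{x ∈ {x ∈ words n | x ∈ C} | ¬HasPatternBlock r m x} ≤
      #{x ∈ words n | ¬HasPatternBlock r m x} :=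
    card_le_card (filter_subset_filter _ (filter_subset _ _))
  have hsplit := card_filter_add_card_filter_not (s := words n) (p := HasPatternBlock r m)
  rw [card_words] at hsplit
  nlinarith

lemma cast_card_words_not_hasPatternBlock (n ℓ : ℕ) :
    (((2 ^ (2 * ℓ) - 2 * ℓ) ^ (n / (2 * ℓ)) * 2 ^ (n % (2 * ℓ)) : ℕ) : ℝ) =
      2 ^ n * (1 - 2 * (ℓ : ℝ) / 2 ^ (2 * ℓ)) ^ (n / (2 * ℓ)) := by
  have h2ℓ : 2 * ℓ ≤ 2 ^ (2 * ℓ) := (Nat.lt_two_pow_self).le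
  have hn : (2 : ℝ) ^ n = ((2 : ℝ) ^ (2 * ℓ)) ^ (n / (2 * ℓ)) * 2 ^ (n % (2 * ℓ)) := by
    rw [← pow_mul, ← pow_add, Nat.div_add_mod]
  have hq : (2 : ℝ) ^ (2 * ℓ) - 2 * ℓ =
      2 ^ (2 * ℓ) * (1 - 2 * (ℓ : ℝ) / 2 ^ (2 * ℓ)) := by
    field_simp
  push_cast [Nat.cast_sub h2ℓ]
  rw [hn, hq, mul_pow]
  ring

end ReconCode

open Finset ReconCode

theorem stmt6_general (ℓ n : ℕ) (hℓ : 1 ≤ ℓ)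
    (C : Set (List Bool)) (hC : IsReconCode n 2 1 C) :
    (C.ncard : ℝ) ≤ 2 ^ n *
      ((1 - 2 * (ℓ : ℝ) / 2 ^ (2 * ℓ)) ^ (n / (2 * ℓ)) +
        (1 / (ℓ : ℝ)) * (1 - (1 - 2 * (ℓ : ℝ) / 2 ^ (2 * ℓ)) ^ (n / (2 * ℓ)))) := by
  classical
  set Q := (1 - 2 * (ℓ : ℝ) / 2 ^ (2 * ℓ)) ^ (n / (2 * ℓ))
  have hcount := card_reconCode_mul_le hC (ℓ - 1)
  rw [Nat.sub_add_cancel hℓ] at hcount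
  have hcountR :
      (#{x ∈ words n | x ∈ C} : ℝ) * ℓ ≤ 2 ^ n + (ℓ - 1 : ℝ) * (2 ^ n * Q) := by
    rw [← cast_card_words_not_hasPatternBlock, ← Nat.cast_pred hℓ]
    exact_mod_cast hcount
  have hℓpos : (0 : ℝ) < ℓ := by exact_mod_cast hℓ
  rw [ncard_eq_card_filter_words hC.1]
  calc _ ≤ (2 ^ n + (ℓ - 1 : ℝ) * (2 ^ n * Q)) / ℓ := (le_div_iff₀ hℓpos).2 hcountR
    _ = _ := by field_simp; ring

theorem stmt6 (ℓ n : ℕ) (hℓ : 1 ≤ ℓ) (hn : 2 * ℓ ≤ n)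
    (C : Set (List Bool)) (hC : IsReconCode n 2 1 C) :
    (C.ncard : ℝ) ≤ 2 ^ n *
      ((1 - 2 * (ℓ : ℝ) / 2 ^ (2 * ℓ)) ^ (n / (2 * ℓ)) +
        (1 / (ℓ : ℝ)) * (1 - (1 - 2 * (ℓ : ℝ) / 2 ^ (2 * ℓ)) ^ (n / (2 * ℓ)))) :=
  stmt6_general ℓ n hℓ C hC
end

section
/- Let x be a binary word of length n and let 1 ≤ t < n/2. Then |D_t(x)| = Σ_{i=0}^{t} C(n−t, i) (the maximum possible size of a t-deletion ball) if and only if x is an alternating word, i.e. x = 0101… or x = 1010…. -/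
/-!
Write `N_m(x)` for the number of distinct length-`m` subsequences of `x`. Sorting them by their
first letter gives `N_{m+1}(a :: x) = N_m(x) + H`, where `H` counts those of `x` that start
with `!a`; each of these is `!a :: z` with `z` a subsequence of `x.tail`, so `H ≤ N_m(x.tail)`.
With Pascal's rule for `S(m, t) = ∑_{i ≤ t} C(m, i)` this gives `N_m(x) ≤ S(m, t)` whenever
`|x| = m + t`, with equality for alternating words, where `x` starts with `!a` and
`H = N_m(x.tail)` exactly.

For strictness when `1 ≤ t < m`: a repeated first letter `a a` makes `H` skip both copies
of `a`, losing a term of the strictly increasing `S(m, ·)`. Otherwise the word is `a (!a) w`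
with the defect inside `(!a) :: w`, and induction applies to `(!a) :: w` or to `w`, except when
`w` is alternating: then `(!a) :: w` itself starts with a repeat, and the repeat argument only
needs `t ≤ m`.
-/

open Finset

theorem List.exists_eq_cons_cons_of_not_isChain {α : Type*} {R : α → α → Prop} {x : List α}
    (hx : ¬ x.IsChain R) : ∃ a b w, x = a :: b :: w := by
  rcases x with _ | ⟨a, _ | ⟨b, w⟩⟩
  · simp at hx
  · simp at hx
  · exact ⟨a, b, w, rfl⟩

section Subsequences

variable {α : Type*} [DecidableEq α] {m : ℕ} {x : List α}

def subseqs (m : ℕ) (x : List α) : Finset (List α) := (x.sublistsLen m).toFinset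

@[simp]
theorem mem_subseqs {z : List α} : z ∈ subseqs m x ↔ z.Sublist x ∧ z.length = m := by
  simp [subseqs, List.mem_sublistsLen]

theorem subseqs_zero (x : List α) : subseqs 0 x = {[]} := by
  ext z
  simp only [mem_subseqs, List.length_eq_zero_iff, mem_singleton]
  exact ⟨And.right, fun hz => ⟨hz ▸ List.nil_sublist x, hz⟩⟩

theorem subseqs_length_self (x : List α) : subseqs x.length x = {x} := by
  ext z
  simp only [mem_subseqs, mem_singleton]
  exact ⟨fun ⟨hz, hlen⟩ => hz.eq_of_length_le hlen.ge,
    fun hz => ⟨hz ▸ List.Sublist.refl x, hz ▸ rfl⟩⟩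

theorem subseqs_eq_empty (h : x.length < m) : subseqs m x = ∅ := by
  ext z
  simp only [mem_subseqs, notMem_empty, iff_false, not_and]
  exact fun hz hlen => absurd hz.length_le (by omega)

theorem card_subseqs_le_one (h : x.length ≤ m) : #(subseqs m x) ≤ 1 := by
  rcases h.lt_or_eq with h | rfl
  · simp [subseqs_eq_empty h]
  · simp [subseqs_length_self]

theorem filter_head_subseqs_cons_self (b : α) (x : List α) :
    (subseqs (m + 1) (b :: x)).filter (·.head? = some b) = (subseqs m x).image (b :: ·) := by
  ext z
  simp only [mem_filter, mem_subseqs, mem_image]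
  constructor
  · rintro ⟨⟨hz, hlen⟩, hhead⟩
    obtain ⟨z, rfl⟩ : ∃ z', z = b :: z' := by
      rcases z with _ | ⟨c, z⟩ <;> simp_all
    exact ⟨z, ⟨hz.of_cons_cons, by simpa using hlen⟩, rfl⟩
  · rintro ⟨z, ⟨hz, rfl⟩, rfl⟩
    exact ⟨⟨hz.cons_cons b, rfl⟩, rfl⟩

theorem filter_head_subseqs_cons_of_ne {a b : α} (hab : a ≠ b) (x : List α) :
    (subseqs m (a :: x)).filter (·.head? = some b) = (subseqs m x).filter (·.head? = some b) := by
  ext z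
  simp only [mem_filter, mem_subseqs, and_congr_left_iff]
  intro hhead _
  refine ⟨fun hz => ?_, fun hz => hz.cons a⟩
  rcases List.sublist_cons_iff.mp hz with hz | ⟨r, rfl, -⟩
  · exact hz
  · exact absurd (by simpa using hhead) hab

theorem filter_head_subseqs_subset (b : α) (x : List α) :
    (subseqs (m + 1) x).filter (·.head? = some b) ⊆ (subseqs m x.tail).image (b :: ·) := by
  intro z
  simp only [mem_filter, mem_subseqs, mem_image]
  rintro ⟨⟨hz, hlen⟩, hhead⟩
  obtain ⟨z, rfl⟩ : ∃ z', z = b :: z' := by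
    rcases z with _ | ⟨c, z⟩ <;> simp_all
  exact ⟨z, ⟨hz.tail, by simpa using hlen⟩, rfl⟩

theorem card_filter_head_subseqs_le (b : α) (x : List α) :
    #((subseqs (m + 1) x).filter (·.head? = some b)) ≤ #(subseqs m x.tail) :=
  (card_le_card (filter_head_subseqs_subset b x)).trans card_image_le

end Subsequences

theorem card_subseqs_succ_cons (m : ℕ) (a : Bool) (x : List Bool) :
    #(subseqs (m + 1) (a :: x)) =
      #(subseqs m x) + #((subseqs (m + 1) x).filter (·.head? = some !a)) := by
  have hnot : (subseqs (m + 1) (a :: x)).filter (¬ ·.head? = some a) =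
      (subseqs (m + 1) (a :: x)).filter (·.head? = some !a) := by
    refine filter_congr fun z hz => ?_
    rcases z with _ | ⟨c, z⟩
    · simp at hz
    · cases a <;> cases c <;> simp
  rw [← card_filter_add_card_filter_not (·.head? = some a), hnot, filter_head_subseqs_cons_self,
    card_image_of_injective _ List.cons_injective, filter_head_subseqs_cons_of_ne (by simp)]

theorem card_subseqs_succ_cons_not_cons (m : ℕ) (a : Bool) (w : List Bool) :
    #(subseqs (m + 1) (a :: (!a) :: w)) = #(subseqs m ((!a) :: w)) + #(subseqs m w) := by
  rw [card_subseqs_succ_cons, filter_head_subseqs_cons_self,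
    card_image_of_injective _ List.cons_injective]

def chooseSum (m t : ℕ) : ℕ := ∑ i ∈ range (t + 1), m.choose i

theorem chooseSum_zero_left (t : ℕ) : chooseSum 0 t = 1 := by
  simp [chooseSum, sum_range_succ', Nat.choose_zero_succ]

theorem chooseSum_zero_right (m : ℕ) : chooseSum m 0 = 1 := by
  simp [chooseSum]

theorem chooseSum_succ_succ (m t : ℕ) :
    chooseSum (m + 1) (t + 1) = chooseSum m (t + 1) + chooseSum m t := by
  simp only [chooseSum, sum_range_succ' _ (t + 1), Nat.choose_succ_succ', sum_add_distrib,
    Nat.choose_zero_right]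
  ring

theorem chooseSum_mono (m : ℕ) : Monotone (chooseSum m) := fun _ _ h =>
  sum_le_sum_of_subset (range_subset_range.mpr (by omega))

theorem chooseSum_lt_succ {m t : ℕ} (h : t < m) : chooseSum m t < chooseSum m (t + 1) := by
  rw [chooseSum, chooseSum, sum_range_succ _ (t + 1)]
  exact Nat.lt_add_of_pos_right (Nat.choose_pos h)

theorem chooseSum_pos (m t : ℕ) : 0 < chooseSum m t :=
  (chooseSum_zero_right m).symm.trans_le (chooseSum_mono m t.zero_le)

theorem card_subseqs_le {m t : ℕ} {x : List Bool} (h : x.length ≤ m + t) :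
    #(subseqs m x) ≤ chooseSum m t := by
  induction m generalizing t x with
  | zero => simp [subseqs_zero, chooseSum_zero_left]
  | succ m ih =>
    rcases t with _ | t
    · exact (card_subseqs_le_one h).trans_eq (chooseSum_zero_right _).symm
    rcases x with _ | ⟨a, x⟩
    · simp [subseqs_eq_empty]
    have hx : x.length ≤ m + (t + 1) := by simp at h; omega
    have htail : x.tail.length ≤ m + t := by simp; omega
    rw [card_subseqs_succ_cons, chooseSum_succ_succ]
    exact add_le_add (ih hx) ((card_filter_head_subseqs_le _ x).trans (ih htail))

theorem card_subseqs_lt_of_length_lt {m t : ℕ} {x : List Bool} (h : x.length < m + t)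
    (htm : t ≤ m) : #(subseqs m x) < chooseSum m t := by
  rcases t with _ | t
  · simp [subseqs_eq_empty (m := m) (by omega), chooseSum_zero_right]
  · exact (card_subseqs_le (by omega)).trans_lt (chooseSum_lt_succ htm)

theorem card_subseqs_of_isChain {m t : ℕ} {x : List Bool} (hx : x.IsChain (· ≠ ·))
    (h : x.length = m + t) : #(subseqs m x) = chooseSum m t := by
  induction m generalizing t x with
  | zero => simp [subseqs_zero, chooseSum_zero_left]
  | succ m ih =>
    rcases t with _ | t
    · rw [← h, subseqs_length_self, card_singleton, chooseSum_zero_right]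
    obtain ⟨a, w, rfl⟩ : ∃ a w, x = a :: (!a) :: w := by
      rcases x with _ | ⟨a, _ | ⟨b, w⟩⟩
      · simp at h
      · simp at h; omega
      · exact ⟨a, w, by rw [Bool.eq_not.mpr (List.isChain_cons_cons.mp hx).1.symm]⟩
    have htail := (List.isChain_cons_cons.mp hx).2
    rw [card_subseqs_succ_cons_not_cons, chooseSum_succ_succ,
      ih (t := t + 1) htail (by simp at h ⊢; omega),
      ih (t := t) (x := w) htail.tail (by simp at h ⊢; omega)]

theorem card_subseqs_cons_self_cons_lt {m t : ℕ} (a : Bool) (w : List Bool)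
    (h : (a :: a :: w).length = m + t) (ht : 1 ≤ t) (htm : t ≤ m) :
    #(subseqs m (a :: a :: w)) < chooseSum m t := by
  obtain ⟨m, rfl⟩ : ∃ m', m = m' + 1 := ⟨m - 1, by omega⟩
  obtain ⟨t, rfl⟩ : ∃ t', t = t' + 1 := ⟨t - 1, by omega⟩
  have hfirst : #(subseqs m (a :: w)) ≤ chooseSum m (t + 1) :=
    card_subseqs_le (by simp at h ⊢; omega)
  -- a subsequence beginning with `!a` cannot use either `a`, so two letters are lost
  have hsecond : #((subseqs (m + 1) w).filter (·.head? = some !a)) < chooseSum m t := by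
    rcases w with _ | ⟨c, w⟩
    · simpa [subseqs_eq_empty] using chooseSum_pos m t
    · exact (card_filter_head_subseqs_le _ _).trans_lt
        (card_subseqs_lt_of_length_lt (by simp at h ⊢; omega) (by omega))
  rw [card_subseqs_succ_cons, filter_head_subseqs_cons_of_ne (by simp), chooseSum_succ_succ]
  exact add_lt_add_of_le_of_lt hfirst hsecond

theorem card_subseqs_lt_of_not_isChain {m t : ℕ} {x : List Bool} (hx : ¬ x.IsChain (· ≠ ·))
    (h : x.length = m + t) (ht : 1 ≤ t) (htm : t < m) : #(subseqs m x) < chooseSum m t := by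
  induction m generalizing t x with
  | zero => omega
  | succ m ih =>
    obtain ⟨a, b, w, rfl⟩ := List.exists_eq_cons_cons_of_not_isChain hx
    by_cases hba : b = a
    · subst hba
      exact card_subseqs_cons_self_cons_lt b w h ht htm.le
    obtain rfl : b = !a := Bool.eq_not.mpr hba
    have hbw : ¬ ((!a) :: w).IsChain (· ≠ ·) := fun hc =>
      hx (List.isChain_cons_cons.mpr ⟨by simp, hc⟩)
    obtain ⟨t, rfl⟩ : ∃ t', t = t' + 1 := ⟨t - 1, by omega⟩
    simp only [List.length_cons] at h
    rw [card_subseqs_succ_cons_not_cons, chooseSum_succ_succ]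
    by_cases hw : w.IsChain (· ≠ ·)
    · obtain ⟨w, rfl⟩ : ∃ w', w = (!a) :: w' := by
        rcases w with _ | ⟨c, w⟩
        · simp at hbw
        · refine ⟨w, ?_⟩
          by_contra hc
          exact hbw (List.isChain_cons_cons.mpr ⟨fun he => hc (by rw [he]), hw⟩)
      exact add_lt_add_of_lt_of_le
        (card_subseqs_cons_self_cons_lt (!a) w (by simp at h ⊢; omega) (by omega) (by omega))
        (card_subseqs_le (by simp at h ⊢; omega))
    · obtain ⟨c, d, w, rfl⟩ := List.exists_eq_cons_cons_of_not_isChain hw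
      simp only [List.length_cons] at h
      rcases t with _ | t
      · exact add_lt_add_of_lt_of_le (ih hbw (by simp; omega) le_rfl (by omega))
          (card_subseqs_le (by simp; omega))
      · exact add_lt_add_of_le_of_lt (card_subseqs_le (by simp; omega))
          (ih hw (by simp; omega) (by omega) (by omega))

theorem deletionBall_eq_subseqs {t : ℕ} {x : List Bool} (ht : t ≤ x.length) :
    deletionBall t x = subseqs (x.length - t) x := by
  ext z
  simp only [deletionBall, Set.mem_ofPred_eq, mem_coe, mem_subseqs]
  exact and_congr_right fun _ => by omega

/-- For `1 ≤ t < n/2`, the `t`-deletion ball of a word `x` of length `n` has the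
maximum possible size `∑_{i=0}^{t} C(n-t, i)` if and only if `x` is alternating
(`0101…` or `1010…`, i.e. adjacent symbols are distinct). -/
theorem stmt12 (n t : ℕ) (ht1 : 1 ≤ t) (ht2 : 2 * t < n)
    (x : List Bool) (hx : x.length = n) :
    (deletionBall t x).ncard = ∑ i ∈ Finset.range (t + 1), (n - t).choose i ↔
      List.Chain' (· ≠ ·) x := by
  have hlen : x.length = (n - t) + t := by omega
  rw [deletionBall_eq_subseqs (by omega), Set.ncard_coe_finset, hx]
  change #(subseqs (n - t) x) = chooseSum (n - t) t ↔ x.IsChain (· ≠ ·)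
  refine ⟨fun heq => ?_, fun hchain => card_subseqs_of_isChain hchain hlen⟩
  by_contra hchain
  exact (card_subseqs_lt_of_not_isChain hchain hlen ht1 (by omega)).ne heq
end

section
/- Let u and v be binary words and t ≥ 1 with t ≤ |u| + |v| + 1. Let x = u·1·v and y = u·0·v (so x and y have Hamming distance one). Then D_t(x) ∩ D_t(y) = D_{t−1}(u·v). -/
namespace List

variable {α : Type*}

theorem sublist_append_of_sublist_append_cons {a b : α} (hab : a ≠ b) {u v z : List α}
    (ha : z <+ u ++ a :: v) (hb : z <+ u ++ b :: v) : z <+ u ++ v := by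
  induction u generalizing z with
  | nil =>
    rw [nil_append, sublist_cons_iff] at ha hb
    rcases ha with ha | ⟨r, rfl, -⟩
    · exact ha
    rcases hb with hb | ⟨r', hr, -⟩
    · exact hb
    exact absurd (cons.inj hr).1 hab
  | cons c u ih =>
    rw [cons_append, sublist_cons_iff] at ha hb
    rcases ha with ha | ⟨r, rfl, hra⟩ <;> rcases hb with hb | ⟨r', hr, hrb⟩
    · exact (ih ha hb).cons c
    · obtain rfl := hr
      exact (ih ((sublist_cons_self c r').trans ha) hrb).cons_cons c
    · exact (ih hra ((sublist_cons_self c r).trans hb)).cons_cons c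
    · obtain rfl := (cons.inj hr).2
      exact (ih hra hrb).cons_cons c

theorem sublist_append_cons (u v : List α) (a : α) : u ++ v <+ u ++ a :: v :=
  (Sublist.refl u).append (sublist_cons_self a v)

end List

theorem stmt13_general (u v : List Bool) (t : ℕ) (ht1 : 1 ≤ t) :
    deletionBall t (u ++ true :: v) ∩ deletionBall t (u ++ false :: v) =
      deletionBall (t - 1) (u ++ v) := by
  ext z
  simp only [deletionBall, Set.mem_inter_iff, Set.mem_ofPred_eq, List.length_append,
    List.length_cons]
  constructor
  · rintro ⟨⟨h1, hl⟩, h2, -⟩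
    exact ⟨List.sublist_append_of_sublist_append_cons (by decide) h1 h2, by omega⟩
  · rintro ⟨hs, hl⟩
    exact ⟨⟨hs.trans (List.sublist_append_cons u v true), by omega⟩,
      hs.trans (List.sublist_append_cons u v false), by omega⟩

/-- For `x = u·1·v` and `y = u·0·v` (Hamming distance one) and `1 ≤ t ≤ |u|+|v|+1`,
we have `D_t(x) ∩ D_t(y) = D_{t-1}(u·v)`. -/
theorem stmt13 (u v : List Bool) (t : ℕ) (ht1 : 1 ≤ t)
    (ht2 : t ≤ u.length + v.length + 1) :
    deletionBall t (u ++ true :: v) ∩ deletionBall t (u ++ false :: v) =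
      deletionBall (t - 1) (u ++ v) :=
  stmt13_general u v t ht1
end

section
/- Let x and y be binary words of length n ≥ 4 that are Type-B-confusable, and suppose D_1(x) ∩ D_1(y) = {z} is a singleton. Then there exists a set T of binary words of length n−2 with |T| ≤ 2 such that D_2(x) ∩ D_2(y) = D_1(z) ∪ T. -/
/-- One-sided Type-B confusability:
`x = u·a·ā·v·b·w` and `y = u·ā·v·b·b̄·w`. -/
def TypeBOne (x y : List Bool) : Prop :=
  ∃ (u v w : List Bool) (a b : Bool),
    x = u ++ a :: (!a) :: v ++ b :: w ∧ y = u ++ (!a) :: v ++ b :: (!b) :: w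

/-- `x` and `y` are Type-B-confusable (possibly after swapping `x` and `y`). -/
def TypeBConfusable (x y : List Bool) : Prop := TypeBOne x y ∨ TypeBOne y x

/-!
Write `x = u·a·M·w` and `y = u·M·b̄·w` with `M = ā·v·b`; the unique common 1-deletion is
`z = u·M·w`. A common subsequence of length `n - 2` that is not a subsequence of `z` keeps the
letter `a` of `x` and the letter `b̄` of `y`. After stripping the common prefix `u` and suffix `w`
(the suffix by reversal), such a word is a common 1-deletion of `a·ā·v` and `v·b·b̄`. These
words differ, as otherwise `a·ā·v` would be a second common 1-deletion of `x` and `y`, and two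
distinct words of equal length have at most two common 1-deletions.
-/

open List

section Deletions

variable {α : Type*}

def IsCommonDeletion (t : ℕ) (x y s : List α) : Prop :=
  s <+ x ∧ s <+ y ∧ s.length + t = x.length

def UniqueCommonDeletion (x y z : List α) : Prop :=
  ∀ s, IsCommonDeletion 1 x y s → s = z

def AtMostTwoExtraDeletions (x y z : List α) : Prop :=
  ∃ t₁ t₂, ∀ s, IsCommonDeletion 2 x y s → ¬ s <+ z → s = t₁ ∨ s = t₂

theorem List.sublist_append_singleton_iff {s l : List α} {d : α} :
    s <+ l ++ [d] ↔ s <+ l ∨ ∃ r, s = r ++ [d] ∧ r <+ l := by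
  constructor
  · intro h
    obtain ⟨r₁, r₂, rfl, h₁, h₂⟩ := sublist_append_iff.1 h
    rcases sublist_singleton.1 h₂ with rfl | rfl
    · exact Or.inl (by simpa using h₁)
    · exact Or.inr ⟨r₁, rfl, h₁⟩
  · rintro (h | ⟨r, rfl, h⟩)
    · exact h.trans (sublist_append_left _ _)
    · exact h.append_right _

theorem List.sublist_cons_cons_cases {s x y : List α} {d : α} (hx : s <+ d :: x)
    (hy : s <+ d :: y) : (s <+ x ∧ s <+ y) ∨ ∃ r, s = d :: r ∧ r <+ x ∧ r <+ y := by
  rcases sublist_cons_iff.1 hx with hx | ⟨r, rfl, hr⟩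
  · rcases sublist_cons_iff.1 hy with hy | ⟨r, rfl, hry⟩
    · exact Or.inl ⟨hx, hy⟩
    · exact Or.inr ⟨r, rfl, (sublist_cons_self d r).trans hx, hry⟩
  · exact Or.inr ⟨r, rfl, hr, cons_sublist_cons.1 hy⟩

theorem exists_pair_isCommonDeletion_one :
    ∀ {x y : List α}, x.length = y.length → x ≠ y →
      ∃ t₁ t₂, ∀ s, IsCommonDeletion 1 x y s → s = t₁ ∨ s = t₂
  | [], [], _, hne => absurd rfl hne
  | a :: x, b :: y, hlen, hne => by
    simp only [length_cons, Nat.add_right_cancel_iff] at hlen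
    by_cases hab : a = b
    · subst hab
      have hne' : x ≠ y := fun h => hne (h ▸ rfl)
      obtain ⟨t₁, t₂, ht⟩ := exists_pair_isCommonDeletion_one hlen hne'
      refine ⟨a :: t₁, a :: t₂, fun s ⟨hsx, hsy, hs⟩ => ?_⟩
      simp only [length_cons] at hs
      rcases sublist_cons_cons_cases hsx hsy with ⟨hsx, hsy⟩ | ⟨r, rfl, hrx, hry⟩
      · exact absurd ((hsx.eq_of_length (by omega)).symm.trans
          (hsy.eq_of_length (by omega))) hne'
      · simp only [length_cons] at hs
        simpa using ht r ⟨hrx, hry, by omega⟩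
    · refine ⟨x, y, fun s ⟨hsx, hsy, hs⟩ => ?_⟩
      simp only [length_cons] at hs
      rcases sublist_cons_iff.1 hsx with hsx | ⟨r, rfl, -⟩
      · exact Or.inl (hsx.eq_of_length (by omega))
      rcases sublist_cons_iff.1 hsy with hsy | ⟨r', hr', -⟩
      · exact Or.inr (hsy.eq_of_length (by simp only [length_cons] at hs ⊢; omega))
      · exact absurd (cons.inj hr').1 hab

section Stripping

variable {x y z : List α}

theorem UniqueCommonDeletion.of_cons {d : α} (h : UniqueCommonDeletion (d :: x) (d :: y) (d :: z)) :
    UniqueCommonDeletion x y z := fun s ⟨hsx, hsy, hs⟩ =>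
  (cons.inj (h (d :: s) ⟨hsx.cons_cons d, hsy.cons_cons d, by simpa using hs⟩)).2

theorem AtMostTwoExtraDeletions.cons {d : α} (h : AtMostTwoExtraDeletions x y z)
    (hu : UniqueCommonDeletion (d :: x) (d :: y) (d :: z)) :
    AtMostTwoExtraDeletions (d :: x) (d :: y) (d :: z) := by
  obtain ⟨t₁, t₂, ht⟩ := h
  refine ⟨d :: t₁, d :: t₂, fun s ⟨hsx, hsy, hs⟩ hsz => ?_⟩
  simp only [length_cons] at hs
  rcases sublist_cons_cons_cases hsx hsy with ⟨hsx, hsy⟩ | ⟨r, rfl, hrx, hry⟩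
  · -- `d :: s` would be a second common 1-deletion
    have := (cons.inj (hu (d :: s) ⟨hsx.cons_cons d, hsy.cons_cons d, by simpa using hs⟩)).2
    exact absurd (this ▸ sublist_cons_self d z) hsz
  · simp only [length_cons] at hs
    simpa using ht r ⟨hrx, hry, by omega⟩ fun h => hsz (h.cons_cons d)

theorem isCommonDeletion_reverse {t : ℕ} {s : List α} :
    IsCommonDeletion t x.reverse y.reverse s ↔ IsCommonDeletion t x y s.reverse := by
  simp only [IsCommonDeletion, sublist_reverse_iff, length_reverse]

theorem UniqueCommonDeletion.reverse (h : UniqueCommonDeletion x y z) :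
    UniqueCommonDeletion x.reverse y.reverse z.reverse := fun _ hs =>
  reverse_eq_iff.1 (h _ (isCommonDeletion_reverse.1 hs))

theorem AtMostTwoExtraDeletions.reverse (h : AtMostTwoExtraDeletions x y z) :
    AtMostTwoExtraDeletions x.reverse y.reverse z.reverse := by
  obtain ⟨t₁, t₂, ht⟩ := h
  refine ⟨t₁.reverse, t₂.reverse, fun s hs hsz => ?_⟩
  simpa only [reverse_eq_iff] using
    ht _ (isCommonDeletion_reverse.1 hs) (by rwa [← sublist_reverse_iff])

theorem atMostTwoExtraDeletions_reverse_of_imp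
    (h : UniqueCommonDeletion x y z → AtMostTwoExtraDeletions x y z) :
    UniqueCommonDeletion x.reverse y.reverse z.reverse →
      AtMostTwoExtraDeletions x.reverse y.reverse z.reverse := fun hu =>
  (h (by simpa only [reverse_reverse] using hu.reverse)).reverse

theorem atMostTwoExtraDeletions_append_left_of_imp (u : List α)
    (h : UniqueCommonDeletion x y z → AtMostTwoExtraDeletions x y z) :
    UniqueCommonDeletion (u ++ x) (u ++ y) (u ++ z) →
      AtMostTwoExtraDeletions (u ++ x) (u ++ y) (u ++ z) := by
  induction u with
  | nil => exact h
  | cons d u ih => exact fun hu => (ih hu.of_cons).cons hu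

theorem atMostTwoExtraDeletions_append_right_of_imp (w : List α)
    (h : UniqueCommonDeletion x y z → AtMostTwoExtraDeletions x y z) :
    UniqueCommonDeletion (x ++ w) (y ++ w) (z ++ w) →
      AtMostTwoExtraDeletions (x ++ w) (y ++ w) (z ++ w) := by
  simpa only [reverse_append, reverse_reverse] using atMostTwoExtraDeletions_reverse_of_imp
    (atMostTwoExtraDeletions_append_left_of_imp w.reverse
      (atMostTwoExtraDeletions_reverse_of_imp h))

end Stripping

theorem atMostTwoExtraDeletions_cons_append_singleton {a c m₀ m₁ : α} {K : List α}
    (ha : m₀ ≠ a) (hc : m₁ ≠ c)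
    (hu : UniqueCommonDeletion (a :: (m₀ :: K ++ [m₁])) (m₀ :: K ++ [m₁] ++ [c])
      (m₀ :: K ++ [m₁])) :
    AtMostTwoExtraDeletions (a :: (m₀ :: K ++ [m₁])) (m₀ :: K ++ [m₁] ++ [c])
      (m₀ :: K ++ [m₁]) := by
  have hne : a :: m₀ :: K ≠ K ++ [m₁, c] := by
    intro h
    have hA : IsCommonDeletion 1 (a :: (m₀ :: K ++ [m₁])) (m₀ :: K ++ [m₁] ++ [c])
        (a :: m₀ :: K) :=
      ⟨(sublist_append_left _ _).cons_cons a, by rw [h]; simp, by simp⟩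
    exact ha (cons.inj (hu _ hA)).1.symm
  obtain ⟨t₁, t₂, ht⟩ := exists_pair_isCommonDeletion_one (by simp) hne
  refine ⟨t₁, t₂, fun s ⟨hsx, hsy, hs⟩ hsM => ht s ⟨?_, ?_, ?_⟩⟩
  all_goals
    obtain ⟨g, rfl, hg⟩ := (sublist_cons_iff.1 hsx).resolve_left hsM
    obtain ⟨h, hgh, hh⟩ := (sublist_append_singleton_iff.1 hsy).resolve_left hsM
  · rcases sublist_append_singleton_iff.1 hg with hg | ⟨g', rfl, -⟩
    · exact hg.cons_cons a
    · have hgh : (a :: g') ++ [m₁] = h ++ [c] := hgh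
      exact absurd (append_singleton_inj.1 hgh).2 hc
  · rcases sublist_cons_iff.1 hh with hh | ⟨r, rfl, -⟩
    · simpa [hgh] using hh.append_right [c]
    · exact absurd (cons.inj hgh).1 ha.symm
  · simp only [length_cons, length_append, length_nil] at hs ⊢
    omega

end Deletions

theorem TypeBOne.atMostTwoExtraDeletions {x y z : List Bool} (hxy : TypeBOne x y)
    (hz : UniqueCommonDeletion x y z) : AtMostTwoExtraDeletions x y z := by
  obtain ⟨u, v, w, a, b, rfl, rfl⟩ := hxy
  have hx : u ++ a :: (!a) :: v ++ b :: w = u ++ a :: ((!a) :: v ++ [b]) ++ w := by simp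
  have hy : u ++ (!a) :: v ++ b :: (!b) :: w = u ++ ((!a) :: v ++ [b] ++ [!b]) ++ w := by simp
  rw [hx, hy] at hz ⊢
  have hzM : z = u ++ ((!a) :: v ++ [b]) ++ w := by
    refine (hz _ ⟨?_, ?_, by simp; omega⟩).symm
    · exact ((sublist_cons_self _ _).append_left u).append_right w
    · exact ((sublist_append_left _ _).append_left u).append_right w
  subst hzM
  exact atMostTwoExtraDeletions_append_right_of_imp w
    (atMostTwoExtraDeletions_append_left_of_imp u
      (atMostTwoExtraDeletions_cons_append_singleton (by simp) (by simp))) hz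

theorem isCommonDeletion_iff_mem_inter {t : ℕ} {x y s : List Bool} (hlen : x.length = y.length) :
    IsCommonDeletion t x y s ↔ s ∈ deletionBall t x ∩ deletionBall t y := by
  simp only [IsCommonDeletion, deletionBall, Set.mem_inter_iff, Set.mem_ofPred_eq, hlen]
  tauto

theorem exists_finset_deletionBall_two_inter {x y z : List Bool} (hlen : x.length = y.length)
    (hz : deletionBall 1 x ∩ deletionBall 1 y = {z})
    (h : UniqueCommonDeletion x y z → AtMostTwoExtraDeletions x y z) :
    ∃ T : Finset (List Bool), T.card ≤ 2 ∧ (∀ w ∈ T, w.length + 2 = x.length) ∧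
      deletionBall 2 x ∩ deletionBall 2 y = deletionBall 1 z ∪ ↑T := by
  classical
  have hzmem : z ∈ deletionBall 1 x ∩ deletionBall 1 y := hz ▸ rfl
  obtain ⟨t₁, t₂, ht⟩ := h fun s hs =>
    Set.mem_singleton_iff.1 (hz ▸ (isCommonDeletion_iff_mem_inter hlen).1 hs)
  refine ⟨({t₁, t₂} : Finset _).filter (· ∈ deletionBall 2 x ∩ deletionBall 2 y),
    (Finset.card_filter_le _ _).trans Finset.card_le_two,
    fun w hw => (Finset.mem_filter.1 hw).2.1.2, Set.ext fun s => ⟨fun hs => ?_, ?_⟩⟩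
  · by_cases hsz : s <+ z
    · exact Or.inl ⟨hsz, by have := hs.1.2; have := hzmem.1.2; omega⟩
    · refine Or.inr (Finset.mem_filter.2 ⟨?_, hs⟩)
      simpa using ht s ((isCommonDeletion_iff_mem_inter hlen).2 hs) hsz
  · rintro (⟨hsz, hs⟩ | hs)
    · have := hzmem.1.2
      exact ⟨⟨hsz.trans hzmem.1.1, by omega⟩, hsz.trans hzmem.2.1, by omega⟩
    · exact (Finset.mem_filter.1 hs).2

theorem stmt15_general (n : ℕ) (x y : List Bool)
    (hx : x.length = n) (hy : y.length = n) (hB : TypeBConfusable x y)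
    (z : List Bool) (hz : deletionBall 1 x ∩ deletionBall 1 y = {z}) :
    ∃ T : Finset (List Bool), T.card ≤ 2 ∧ (∀ w ∈ T, w.length = n - 2) ∧
      deletionBall 2 x ∩ deletionBall 2 y = deletionBall 1 z ∪ ↑T := by
  suffices ∃ T : Finset (List Bool), T.card ≤ 2 ∧ (∀ w ∈ T, w.length + 2 = n) ∧
      deletionBall 2 x ∩ deletionBall 2 y = deletionBall 1 z ∪ ↑T by
    obtain ⟨T, hT, hTlen, hxy⟩ := this
    exact ⟨T, hT, fun w hw => by have := hTlen w hw; omega, hxy⟩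
  rcases hB with h | h
  · simpa only [hx] using
      exists_finset_deletionBall_two_inter (hx.trans hy.symm) hz h.atMostTwoExtraDeletions
  · rw [Set.inter_comm] at hz ⊢
    simpa only [hy] using
      exists_finset_deletionBall_two_inter (hy.trans hx.symm) hz h.atMostTwoExtraDeletions

theorem stmt15 (n : ℕ) (hn : 4 ≤ n) (x y : List Bool)
    (hx : x.length = n) (hy : y.length = n) (hB : TypeBConfusable x y)
    (z : List Bool) (hz : deletionBall 1 x ∩ deletionBall 1 y = {z}) :
    ∃ T : Finset (List Bool), T.card ≤ 2 ∧ (∀ w ∈ T, w.length = n - 2) ∧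
      deletionBall 2 x ∩ deletionBall 2 y = deletionBall 1 z ∪ ↑T :=
  stmt15_general n x y hx hy hB z hz
end

section
/- Let x and y be binary words of the same length that are Type-B-confusable, and suppose D_1(x) ∩ D_1(y) = {z} is a singleton. Then z is not an alternating word (i.e., z has two equal adjacent symbols). -/
lemma append_mem_deletionBall_one (u w : List Bool) (c : Bool) :
    u ++ w ∈ deletionBall 1 (u ++ c :: w) :=
  ⟨(List.sublist_cons_self c w).append_left u, by simp; omega⟩

lemma append_pair_eq_of_isChain_ne {c b : Bool} {v : List Bool}
    (h : (c :: (v ++ [b])).IsChain (· ≠ ·)) : v ++ [b, !b] = (!c) :: c :: v := by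
  induction v generalizing c with
  | nil =>
    obtain rfl : b = !c := Bool.eq_not.mpr (Ne.symm (by simpa using h))
    simp
  | cons d v ih =>
    obtain ⟨hcd, htail⟩ := List.isChain_cons_cons.mp h
    obtain rfl : d = !c := Bool.eq_not.mpr hcd.symm
    simp [ih htail]

theorem not_isChain_ne_of_typeBOne {x y z : List Bool} (hB : TypeBOne x y)
    (hz : deletionBall 1 x ∩ deletionBall 1 y = {z}) : ¬ z.IsChain (· ≠ ·) := by
  obtain ⟨u, v, w, a, b, rfl, rfl⟩ := hB
  rw [Set.eq_singleton_iff_unique_mem] at hz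
  have hz₁ : u ++ (!a) :: (v ++ b :: w) = z := hz.2 _
    ⟨by simpa using append_mem_deletionBall_one u ((!a) :: (v ++ b :: w)) a,
     by simpa using append_mem_deletionBall_one (u ++ (!a) :: (v ++ [b])) w (!b)⟩
  intro hchain
  have hmid : ((!a) :: (v ++ [b])).IsChain (· ≠ ·) := hchain.infix ⟨u, w, by simp [← hz₁]⟩
  have hshift : v ++ [b, !b] = a :: (!a) :: v := by
    simpa using append_pair_eq_of_isChain_ne hmid
  have hy : u ++ (!a) :: v ++ b :: (!b) :: w = u ++ (!a) :: a :: (!a) :: (v ++ w) := by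
    simpa using congrArg (fun l => u ++ (!a) :: (l ++ w)) hshift
  have hz₂ : u ++ a :: (!a) :: (v ++ w) = z := hz.2 _
    ⟨by simpa using append_mem_deletionBall_one (u ++ a :: (!a) :: v) w b,
     by simpa [hy] using append_mem_deletionBall_one u (a :: (!a) :: (v ++ w)) (!a)⟩
  simpa using hz₂.trans hz₁.symm

theorem stmt16_general (x y : List Bool)
    (hB : TypeBConfusable x y) (z : List Bool)
    (hz : deletionBall 1 x ∩ deletionBall 1 y = {z}) :
    ¬ List.Chain' (· ≠ ·) z := by
  rcases hB with hxy | hyx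
  · exact not_isChain_ne_of_typeBOne hxy hz
  · exact not_isChain_ne_of_typeBOne hyx (Set.inter_comm _ _ ▸ hz)

/-- If `x` and `y` are Type-B-confusable with `D_1(x) ∩ D_1(y) = {z}`, then `z`
is not alternating. -/
theorem stmt16 (x y : List Bool) (hlen : x.length = y.length)
    (hB : TypeBConfusable x y) (z : List Bool)
    (hz : deletionBall 1 x ∩ deletionBall 1 y = {z}) :
    ¬ List.Chain' (· ≠ ·) z :=
  stmt16_general x y hB z hz
end

section
/- Let P ≥ 1 and let z be a binary word of length n ≥ 1 in which every alternating contiguous substring (a contiguous substring with all adjacent symbols distinct) has length at most P. Then the number of runs of z (maximal constant contiguous substrings) is at most n − ⌈n/P⌉ + 1; consequently |D_1(z)| ≤ n − ⌈n/P⌉ + 1. -/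
/-!
Cutting `z` at each of its `s` positions `i` with `z[i] = z[i+1]` splits it into `s + 1`
alternating blocks, each of length at most `P`; hence `n ≤ (s + 1) P`, i.e. `s ≥ ⌈n/P⌉ - 1`.
Every such position merges two letters into one run, so `z` has exactly `n - s` runs.
Finally, deleting any letter of a run gives the same word, so `|D_1(z)|` is at most the
number of runs.
-/

namespace List

variable {α : Type*}

theorem exists_eq_append_cons_cons_of_not_isChain_ne {l : List α}
    (h : ¬ l.IsChain (· ≠ ·)) : ∃ u a v, l = u ++ a :: a :: v := by
  rw [isChain_iff_forall_rel_of_append_cons_cons] at h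
  push Not at h
  obtain ⟨a, _, u, v, rfl, rfl⟩ := h
  exact ⟨u, a, v, rfl⟩

variable [DecidableEq α]

/-- The number of positions `i` with `l[i] = l[i+1]`. -/
def stutterCount : List α → ℕ
  | [] => 0
  | a :: l => stutterCount l + if l.head? = some a then 1 else 0

theorem length_destutter_ne_cons (a : α) (l : List α) :
    ((a :: l).destutter (· ≠ ·)).length =
      (l.destutter (· ≠ ·)).length + if l.head? = some a then 0 else 1 := by
  cases l with
  | nil => simp
  | cons b t =>
    by_cases hab : a = b
    · subst hab
      simp [destutter_cons']
    · simp [destutter_cons', hab, Ne.symm hab]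

theorem length_destutter_ne_add_stutterCount (l : List α) :
    (l.destutter (· ≠ ·)).length + l.stutterCount = l.length := by
  induction l with
  | nil => rfl
  | cons a l ih =>
    rw [length_destutter_ne_cons, stutterCount, length_cons]
    split <;> omega

theorem stutterCount_append_cons_cons (u : List α) (a : α) (v : List α) :
    (u ++ a :: a :: v).stutterCount = (u ++ [a]).stutterCount + (a :: v).stutterCount + 1 := by
  induction u with
  | nil => simp [stutterCount]
  | cons x u ih =>
    simp only [cons_append, stutterCount, ih]
    cases u <;> simp <;> omega

theorem length_le_mul_of_forall_isChain_ne_infix {P : ℕ} (l : List α)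
    (h : ∀ w, w <:+: l → w.IsChain (· ≠ ·) → w.length ≤ P) :
    l.length ≤ (l.stutterCount + 1) * P := by
  induction hlen : l.length using Nat.strong_induction_on generalizing l with
  | _ n ih =>
    by_cases hchain : l.IsChain (· ≠ ·)
    · exact hlen ▸ (h l (infix_refl l) hchain).trans (Nat.le_mul_of_pos_left P (Nat.succ_pos _))
    obtain ⟨u, a, v, rfl⟩ := exists_eq_append_cons_cons_of_not_isChain_ne hchain
    have hsplit : u ++ a :: a :: v = (u ++ [a]) ++ (a :: v) := by simp
    have hleft := ih _ (by simp [← hlen]) (u ++ [a])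
      (fun w hw => h w (hw.trans (hsplit ▸ (prefix_append _ _).isInfix))) rfl
    have hright := ih _ (by simp [← hlen]; omega) (a :: v)
      (fun w hw => h w (hw.trans (hsplit ▸ (suffix_append _ _).isInfix))) rfl
    rw [stutterCount_append_cons_cons, ← hlen]
    simp only [length_append, length_cons, length_nil] at hleft hright ⊢
    nlinarith

end List

open List

theorem deletionBall_one_nil : deletionBall 1 [] = ∅ := by
  ext w
  simp [deletionBall]

theorem deletionBall_one_cons (a : Bool) (l : List Bool) :
    deletionBall 1 (a :: l) = insert l ((a :: ·) '' deletionBall 1 l) := by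
  ext w
  simp only [deletionBall, Set.mem_ofPred_eq, Set.mem_insert_iff, Set.mem_image]
  constructor
  · rintro ⟨hsub, hlen⟩
    rcases sublist_cons_iff.mp hsub with h | ⟨r, rfl, hr⟩
    · exact .inl (h.eq_of_length (by simpa using hlen))
    · exact .inr ⟨r, ⟨hr, by simpa using hlen⟩, rfl⟩
  · rintro (rfl | ⟨r, ⟨hr, hlen⟩, rfl⟩)
    · exact ⟨sublist_cons_self _ _, by simp⟩
    · exact ⟨hr.cons_cons a, by simpa using hlen⟩

theorem ncard_deletionBall_one_le (l : List Bool) :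
    (deletionBall 1 l).ncard ≤ (l.destutter (· ≠ ·)).length := by
  induction l with
  | nil => simp [deletionBall_one_nil]
  | cons a l ih =>
    have himage : ((a :: ·) '' deletionBall 1 l).ncard = (deletionBall 1 l).ncard :=
      Set.ncard_image_of_injective _ cons_injective
    rw [deletionBall_one_cons, length_destutter_ne_cons]
    split
    case isTrue hhead =>
      obtain ⟨t, rfl⟩ : ∃ t, l = a :: t := by
        cases l <;> simp_all
      have hmem : a :: t ∈ (a :: ·) '' deletionBall 1 (a :: t) :=
        ⟨t, ⟨sublist_cons_self a t, by simp⟩, rfl⟩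
      rw [Set.insert_eq_self.mpr hmem]
      omega
    case isFalse => exact (Set.ncard_insert_le _ _).trans (by omega)

theorem stmt17_general (n P : ℕ)
    (z : List Bool) (hz : z.length = n)
    (halt : ∀ w : List Bool, w <:+: z → List.Chain' (· ≠ ·) w → w.length ≤ P) :
    (z.destutter (· ≠ ·)).length ≤ n - (n + P - 1) / P + 1 ∧
    (deletionBall 1 z).ncard ≤ n - (n + P - 1) / P + 1 := by
  subst hz
  have hblocks := length_le_mul_of_forall_isChain_ne_infix z halt
  have hruns := length_destutter_ne_add_stutterCount z
  have hceil : (z.length + P - 1) / P ≤ z.stutterCount + 1 := by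
    rcases P.eq_zero_or_pos with rfl | hP
    · simp
    · rw [Nat.div_le_iff_le_mul_add_pred hP, mul_comm]
      omega
  have hbound : (z.destutter (· ≠ ·)).length ≤ z.length - (z.length + P - 1) / P + 1 := by
    omega
  exact ⟨hbound, (ncard_deletionBall_one_le z).trans hbound⟩

/-- If every alternating contiguous substring of `z` (length-`n` word, `n ≥ 1`)
has length at most `P`, then the number of runs of `z` is at most
`n − ⌈n/P⌉ + 1`, and consequently `|D_1(z)| ≤ n − ⌈n/P⌉ + 1`.
The number of runs of `z` is the length of `z.destutter (· ≠ ·)`, and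
`⌈n/P⌉ = (n + P - 1) / P` in natural-number division. -/
theorem stmt17 (n P : ℕ) (hn : 1 ≤ n) (hP : 1 ≤ P)
    (z : List Bool) (hz : z.length = n)
    (halt : ∀ w : List Bool, w <:+: z → List.Chain' (· ≠ ·) w → w.length ≤ P) :
    (z.destutter (· ≠ ·)).length ≤ n - (n + P - 1) / P + 1 ∧
    (deletionBall 1 z).ncard ≤ n - (n + P - 1) / P + 1 :=
  stmt17_general n P z hz halt
end
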